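/- arXiv:2309.06554 — 13 statements merged into one kernel-verified Lean document; each statement's English description precedes it below -/
import Mathlib

section
/- Let m ≥ 1, d ≥ 1 and k > 2m be integers, and let (v_1, …, v_k) ∈ (ℤ^d)^k be a k-term degree-m vector polynomial progression. Then the tuple of squared Euclidean norms (‖v_1‖², …, ‖v_k‖²), where ‖v‖² = Σ_{j=1}^d v_j², is a k-term degree-2m polynomial progression, and ‖v_1‖² = ⋯ = ‖v_k‖² if and only if v_1 = ⋯ = v_k. -/
/-!
Choose polynomials `p j` of degree `≤ m` interpolating the coordinates; the squared norms are then
interpolated by `P = ∑ j, p j ^ 2`, of degree `≤ 2m`. If the squared norms all agree, `P` takes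
one value at `k > 2m` points, so it is constant. Then every `(p j).eval x ^ 2` is bounded by
that constant, and a real polynomial that is bounded on `ℝ` is constant, so every coordinate
sequence is constant.
-/

/-- `(x 0, …, x (k-1))` is a `k`-term degree-`m` polynomial progression:
there is a real polynomial `p` of degree at most `m` with `x i = p (i+1)`. -/
def IsPP (m : ℕ) {k : ℕ} (x : Fin k → ℝ) : Prop :=
  ∃ p : Polynomial ℝ, p.natDegree ≤ m ∧ ∀ i : Fin k, x i = p.eval (((i : ℕ) : ℝ) + 1)

/-- `(v 0, …, v (k-1))` in `ℤ^d` is a `k`-term degree-`m` vector polynomial progression: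
each coordinate sequence is a `k`-term degree-`m` polynomial progression. -/
def IsVecPP (m : ℕ) {k d : ℕ} (v : Fin k → Fin d → ℤ) : Prop :=
  ∀ j : Fin d, IsPP m (fun i => ((v i j : ℤ) : ℝ))

open Polynomial Filter

namespace Polynomial

variable {ι : Type*}

theorem natDegree_sum_sq_le {R : Type*} [CommSemiring R] (s : Finset ι) (p : ι → R[X]) {m : ℕ}
    (hp : ∀ j ∈ s, (p j).natDegree ≤ m) : (∑ j ∈ s, p j ^ 2).natDegree ≤ 2 * m :=
  natDegree_sum_le_of_forall_le _ _ fun j hj => natDegree_pow_le.trans (by gcongr; exact hp j hj)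

theorem eq_C_of_natDegree_lt_card_of_eval_eq {R : Type*} [CommRing R] [IsDomain R] [Fintype ι]
    (p : R[X]) {f : ι → R} (hf : Function.Injective f) {c : R} (heval : ∀ i, p.eval (f i) = c)
    (hcard : p.natDegree < Fintype.card ι) : p = C c :=
  eq_of_natDegree_lt_card_of_eval_eq p (C c) hf (by simpa using heval) (by simpa using hcard)

theorem eq_C_of_sq_eval_le {p : ℝ[X]} {c : ℝ} (h : ∀ x, p.eval x ^ 2 ≤ c) :
    p = C (p.coeff 0) :=
  eq_C_of_degree_le_zero <| (isBoundedUnder_abs_atTop_iff p).mp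
    ⟨√c, eventually_map.mpr (Eventually.of_forall fun x => Real.abs_le_sqrt (h x))⟩

theorem eq_C_of_sum_sq_eq_C {s : Finset ι} {p : ι → ℝ[X]} {c : ℝ} (h : ∑ j ∈ s, p j ^ 2 = C c)
    {j : ι} (hj : j ∈ s) : p j = C ((p j).coeff 0) :=
  eq_C_of_sq_eval_le fun x => by
    have hx := congrArg (eval x) h
    rw [eval_finsetSum, eval_C] at hx
    calc (p j).eval x ^ 2 ≤ ∑ i ∈ s, (p i).eval x ^ 2 :=
          Finset.single_le_sum (f := fun i => (p i).eval x ^ 2) (fun i _ => sq_nonneg _) hj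
      _ = c := by simpa only [eval_pow] using hx

end Polynomial

theorem stmt2_general (m d k : ℕ) (hk : 2 * m < k)
    (v : Fin k → Fin d → ℤ) (hv : IsVecPP m v) :
    IsPP (2 * m) (fun i => ((∑ j, (v i j) ^ 2 : ℤ) : ℝ)) ∧
    ((∀ i i' : Fin k, ∑ j, (v i j) ^ 2 = ∑ j, (v i' j) ^ 2) ↔
      (∀ i i' : Fin k, v i = v i')) := by
  choose p hp_deg hp_eval using hv
  set P : ℝ[X] := ∑ j, p j ^ 2
  have hP_deg : P.natDegree ≤ 2 * m := natDegree_sum_sq_le _ _ fun j _ => hp_deg j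
  have hP_eval (i : Fin k) : ((∑ j, v i j ^ 2 : ℤ) : ℝ) = P.eval (((i : ℕ) : ℝ) + 1) := by
    simp [P, eval_finsetSum, hp_eval]
  refine ⟨⟨P, hP_deg, hP_eval⟩, fun h i i' => ?_, fun h i i' => by rw [h i i']⟩
  have hP_const : P = C ((∑ j, v i j ^ 2 : ℤ) : ℝ) :=
    eq_C_of_natDegree_lt_card_of_eval_eq P (f := fun i : Fin k => ((i : ℕ) : ℝ) + 1)
      (fun a b hab => Fin.ext (by simpa using hab)) (fun i' => by rw [← hP_eval, h])
      (by simpa using hP_deg.trans_lt hk)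
  funext j
  have hi : (v i j : ℝ) = _ := hp_eval j i
  have hi' : (v i' j : ℝ) = _ := hp_eval j i'
  rw [eq_C_of_sum_sq_eq_C hP_const (Finset.mem_univ j), eval_C] at hi hi'
  exact_mod_cast hi.trans hi'.symm

/-- the squared norms of a `k`-term degree-`m` vector polynomial progression
(with `k > 2m`) form a `k`-term degree-`2m` polynomial progression, which is trivial
iff the vector progression is trivial. -/
theorem stmt2 (m d k : ℕ) (hm : 1 ≤ m) (hd : 1 ≤ d) (hk : 2 * m < k)
    (v : Fin k → Fin d → ℤ) (hv : IsVecPP m v) :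
    IsPP (2 * m) (fun i => ((∑ j, (v i j) ^ 2 : ℤ) : ℝ)) ∧
    ((∀ i i' : Fin k, ∑ j, (v i j) ^ 2 = ∑ j, (v i' j) ^ 2) ↔
      (∀ i i' : Fin k, v i = v i')) :=
  stmt2_general m d k hk v hv
end

section
/- Let m ≥ 1 and k ≥ m+2 be integers, and let q, d, N be positive integers with 2^m dividing q and N ≤ q^d. Suppose (x_1, …, x_k) ∈ {0, …, N−1}^k is a k-term degree-m polynomial progression such that for every i ∈ {1, …, k}, every entry of base_{q,d}(x_i) is strictly less than q/2^m. Then (base_{q,d}(x_1), …, base_{q,d}(x_k)) is a k-term degree-m vector polynomial progression, and it satisfies base_{q,d}(x_1) = ⋯ = base_{q,d}(x_k) if and only if x_1 = ⋯ = x_k. -/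
/-- `baseDigits q d x` is the base-`q` representation of `x` with `d` digits:
the `i`-th digit is `x / q^i % q`. -/
def baseDigits (q d : ℕ) (x : ℕ) : Fin d → ℕ := fun i => x / q ^ (i : ℕ) % q

/-
Since `x` is a degree-`m` progression, its `(m+1)`-st forward difference vanishes. Expanding every
`x i` in base `q` writes this difference as `∑ j, q ^ j * Δ^(m+1)(digit j)`. The coefficients of
an `(m+1)`-st difference sum to `0` and their absolute values to `2 ^ (m+1)`, so for a sequence
with values in `[0, q / 2 ^ m)` it has absolute value at most `q - 2 ^ m < q`. Base-`q` expansions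
with such "digits" are unique, so every digit sequence has vanishing `(m+1)`-st difference and is
therefore a degree-`m` progression itself. The second claim is injectivity of base-`q` digits on
`[0, q ^ d)`.
-/

-- `Δ_[h] ^[n]` needs the space: `]^` is a token of the exterior power notation.
open Finset Polynomial fwdDiff

section fwdDiff

variable {M G : Type*} [AddCommMonoid M] [AddCommGroup G] (h : M)

lemma fwdDiff_iter_congr {f g : M → G} {n : ℕ} {y : M}
    (hfg : ∀ t ≤ n, f (y + t • h) = g (y + t • h)) : Δ_[h] ^[n] f y = Δ_[h] ^[n] g y := by
  simp only [fwdDiff_iter_eq_sum_shift]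
  exact sum_congr rfl fun t ht => by rw [hfg t (Nat.le_of_lt_succ (mem_range.1 ht))]

lemma fwdDiff_iter_sub (f g : M → G) (n : ℕ) :
    Δ_[h] ^[n] (f - g) = Δ_[h] ^[n] f - Δ_[h] ^[n] g := by
  simpa only [fwdDiff_aux.coe_fwdDiffₗ_pow] using map_sub (fwdDiff_aux.fwdDiffₗ M G h ^ n) f g

lemma fwdDiff_iter_const_eq_zero (c : G) {n : ℕ} (hn : n ≠ 0) :
    Δ_[h] ^[n] (fun _ : M => c) = 0 := by
  obtain ⟨n, rfl⟩ := Nat.exists_eq_succ_of_ne_zero hn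
  rw [Function.iterate_succ_apply, fwdDiff_const]
  exact Function.iterate_fixed (fwdDiff_const h 0) n

lemma map_fwdDiff_iter {G' : Type*} [AddCommGroup G'] (φ : G →+ G') (f : M → G) (n : ℕ)
    (y : M) : Δ_[h] ^[n] (φ ∘ f) y = φ (Δ_[h] ^[n] f y) := by
  simp [fwdDiff_iter_eq_sum_shift, map_sum, map_zsmul]

lemma fwdDiff_iter_comp_addMonoidHom {M' : Type*} [AddCommMonoid M'] (φ : M →+ M')
    (f : M' → G) (n : ℕ) (y : M) : Δ_[h] ^[n] (f ∘ φ) y = Δ_[φ h] ^[n] f (φ y) := by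
  simp [fwdDiff_iter_eq_sum_shift, map_nsmul]

lemma two_mul_abs_fwdDiff_iter_le {f : M → ℤ} {n : ℕ} (hn : n ≠ 0) {y : M} {a b : ℤ}
    (hf : ∀ t ≤ n, a ≤ f (y + t • h) ∧ f (y + t • h) ≤ b) :
    2 * |Δ_[h] ^[n] f y| ≤ 2 ^ n * (b - a) := by
  set c : ℕ → ℤ := fun t => (-1) ^ (n - t) * n.choose t
  have hc : ∑ t ∈ range (n + 1), c t = 0 := by
    simpa [c] using (fwdDiff_iter_eq_sum_shift h (fun _ => (1 : ℤ)) n y).symm.trans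
      (congrFun (fwdDiff_iter_const_eq_zero h 1 hn) y)
  -- Centring `f` at `(a + b) / 2` is free because the coefficients sum to zero.
  have hcentre :
      2 * Δ_[h] ^[n] f y = ∑ t ∈ range (n + 1), c t * (2 * f (y + t • h) - (a + b)) := by
    simp only [fwdDiff_iter_eq_sum_shift, smul_eq_mul, mul_sub, sum_sub_distrib, ← sum_mul, hc,
      mul_sum, zero_mul, sub_zero, mul_left_comm, c]
  rw [← abs_two, ← abs_mul, hcentre, abs_two]
  calc |∑ t ∈ range (n + 1), c t * (2 * f (y + t • h) - (a + b))|
      ≤ ∑ t ∈ range (n + 1), (n.choose t : ℤ) * (b - a) := by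
        refine (abs_sum_le_sum_abs _ _).trans (sum_le_sum fun t ht => ?_)
        obtain ⟨hat, htb⟩ := hf t (Nat.le_of_lt_succ (mem_range.1 ht))
        simp only [c, abs_mul, abs_pow, abs_neg, abs_one, one_pow, one_mul, Nat.abs_cast]
        exact mul_le_mul_of_nonneg_left (abs_le.2 ⟨by linarith, by linarith⟩) (by positivity)
    _ = 2 ^ n * (b - a) := by
        rw [← sum_mul, ← Nat.cast_sum, Nat.sum_range_choose]
        push_cast
        rfl

end fwdDiff

lemma eq_zero_of_fwdDiff_iter_eq_zero {G : Type*} [AddCommGroup G] {e : ℕ → G} {n k : ℕ}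
    (hinit : ∀ t ≤ n, e t = 0) (hΔ : ∀ i, i + n + 1 < k → Δ_[1] ^[n + 1] e i = 0) :
    ∀ j < k, e j = 0 := by
  intro j
  induction j using Nat.strong_induction_on with
  | _ j ih =>
    intro hj
    by_cases hjn : j ≤ n
    · exact hinit j hjn
    obtain ⟨i, rfl⟩ : ∃ i, j = i + n + 1 := ⟨j - (n + 1), by omega⟩
    have := hΔ i hj
    rw [fwdDiff_iter_eq_sum_shift, sum_range_succ,
      sum_eq_zero fun t ht => by rw [ih _ (by grind) (by grind), smul_zero]] at this
    simpa [add_assoc] using this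

lemma fwdDiff_iter_eval_add_one_eq_zero {p : ℝ[X]} {m : ℕ} (hp : p.natDegree ≤ m) (y : ℕ) :
    Δ_[1] ^[m + 1] (fun n : ℕ => p.eval ((n : ℝ) + 1)) y = 0 := by
  have := fwdDiff_iter_comp_addMonoidHom 1 (fun r : ℝ => p.eval (r + 1)) (m + 1) y
    (φ := Nat.castAddMonoidHom ℝ)
  simp only [Function.comp_def, Nat.coe_castAddMonoidHom, Nat.cast_one] at this
  rw [this]
  exact (fwdDiff_iter_comp_add 1 p.eval 1 (m + 1) y).trans
    (congrFun (fwdDiff_iter_eq_zero_of_degree_lt (by omega)) _)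

lemma isPP_iff_fwdDiff_iter_eq_zero {m k : ℕ} (g : ℕ → ℝ) :
    IsPP m (fun i : Fin k => g i) ↔ ∀ i, i + m + 1 < k → Δ_[1] ^[m + 1] g i = 0 := by
  constructor
  · rintro ⟨p, hp, hpg⟩ i hi
    rw [fwdDiff_iter_congr 1 (g := fun n : ℕ => p.eval ((n : ℝ) + 1)) fun t ht => by
      simpa using hpg ⟨i + t, by omega⟩]
    exact fwdDiff_iter_eval_add_one_eq_zero hp i
  · intro hΔ
    set p := Lagrange.interpolate (range (m + 1)) (fun n : ℕ => (n : ℝ) + 1) g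
    have hnodes : Set.InjOn (fun n : ℕ => (n : ℝ) + 1) (range (m + 1)) := by
      intro a _ b _ hab
      simpa using hab
    have hp : p.natDegree ≤ m := by
      have := Lagrange.degree_interpolate_lt (r := g) hnodes
      rw [card_range] at this
      exact natDegree_le_of_degree_le (Order.le_of_lt_succ this)
    refine ⟨p, hp, fun i => ?_⟩
    have := eq_zero_of_fwdDiff_iter_eq_zero (k := k)
      (e := g - fun n : ℕ => p.eval ((n : ℝ) + 1))
      (fun t ht => sub_eq_zero.2 (Lagrange.eval_interpolate_at_node g hnodes
        (mem_range.2 (Nat.lt_succ_of_le ht))).symm)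
      (fun i hi => by rw [fwdDiff_iter_sub, Pi.sub_apply, hΔ i hi,
        fwdDiff_iter_eval_add_one_eq_zero hp, sub_zero]) i i.2
    exact sub_eq_zero.1 this

lemma isPP_intCast_iff_fwdDiff_iter_eq_zero {m k : ℕ} (g : ℕ → ℤ) :
    IsPP m (fun i : Fin k => (g i : ℝ)) ↔ ∀ i, i + m + 1 < k → Δ_[1] ^[m + 1] g i = 0 := by
  refine (isPP_iff_fwdDiff_iter_eq_zero fun n => (g n : ℝ)).trans
    (forall_congr' fun i => imp_congr_right fun _ => ?_)
  rw [show (fun n => (g n : ℝ)) = Int.castAddHom ℝ ∘ g from rfl, map_fwdDiff_iter]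
  simp

lemma Nat.mod_pow_eq_sum_div_pow_mod_mul_pow (x q d : ℕ) :
    x % q ^ d = ∑ j ∈ range d, x / q ^ j % q * q ^ j := by
  induction d with
  | zero => simp [Nat.mod_one]
  | succ d ih => rw [Nat.mod_pow_succ, ih, sum_range_succ, mul_comm (q ^ d)]

lemma Nat.eq_sum_div_pow_mod_mul_pow {x q d : ℕ} (hx : x < q ^ d) :
    x = ∑ j ∈ Finset.range d, x / q ^ j % q * q ^ j :=
  (Nat.mod_eq_of_lt hx).symm.trans (Nat.mod_pow_eq_sum_div_pow_mod_mul_pow x q d)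

lemma baseDigits_injOn (q d : ℕ) : Set.InjOn (baseDigits q d) (Set.Iio (q ^ d)) := by
  intro x hx y hy hxy
  rw [Nat.eq_sum_div_pow_mod_mul_pow hx, Nat.eq_sum_div_pow_mod_mul_pow hy]
  exact sum_congr rfl fun j hj => by rw [show x / q ^ j % q = y / q ^ j % q from
    congrFun hxy ⟨j, mem_range.1 hj⟩]

lemma Int.eq_zero_of_sum_mul_pow_eq_zero {q : ℤ} {D : ℕ → ℤ} {d : ℕ}
    (hD : ∀ j < d, |D j| < q) (hsum : ∑ j ∈ Finset.range d, D j * q ^ j = 0) :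
    ∀ j < d, D j = 0 := by
  induction d generalizing D with
  | zero => simp
  | succ d ih =>
    rw [sum_range_succ'] at hsum
    simp only [pow_succ', ← mul_left_comm q, ← mul_sum, pow_zero, mul_one] at hsum
    have h0 : D 0 = 0 := Int.eq_zero_of_abs_lt_dvd
      ⟨-∑ j ∈ Finset.range d, D (j + 1) * q ^ j, by linear_combination hsum⟩
      (hD 0 (by omega))
    have hq : q ≠ 0 := ((abs_nonneg _).trans_lt (hD 0 (by omega))).ne'
    have htail := ih (D := fun j => D (j + 1)) (fun j hj => hD (j + 1) (by omega))
      (by simpa [h0, hq] using hsum)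
    rintro (_ | j) hj
    · exact h0
    · exact htail j (by omega)

lemma fwdDiff_iter_eq_zero_of_sum_pow_smul {m d y : ℕ} {q B : ℤ} (hB : 2 ^ m * B ≤ q)
    {D : ℕ → ℕ → ℤ}
    (hD : ∀ j < d, ∀ t ≤ m + 1, 0 ≤ D j (y + t) ∧ D j (y + t) < B)
    (h : Δ_[1] ^[m + 1] (∑ j ∈ range d, q ^ j • D j) y = 0) :
    ∀ j < d, Δ_[1] ^[m + 1] (D j) y = 0 := by
  simp only [fwdDiff_iter_finsetSum, Finset.sum_apply, fwdDiff_iter_const_smul, Pi.smul_apply,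
    smul_eq_mul] at h
  refine Int.eq_zero_of_sum_mul_pow_eq_zero (fun j hj => ?_) (by simpa [mul_comm] using h)
  have := two_mul_abs_fwdDiff_iter_le 1 (f := D j) (n := m + 1) (by omega) (a := 0) (b := B - 1)
    fun t ht => by simpa [Int.le_sub_one_iff] using hD j hj t ht
  rw [pow_succ] at this
  nlinarith [pow_pos (two_pos (α := ℤ)) m]

theorem stmt3_general (m k q d N : ℕ) (hdvd : 2 ^ m ∣ q) (hNq : N ≤ q ^ d)
    (x : Fin k → ℕ) (hx : ∀ i, x i < N)
    (hpp : IsPP m (fun i => ((x i : ℕ) : ℝ)))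
    (hsmall : ∀ i j, baseDigits q d (x i) j < q / 2 ^ m) :
    IsVecPP m (fun i j => ((baseDigits q d (x i) j : ℕ) : ℤ)) ∧
    ((∀ i i', baseDigits q d (x i) = baseDigits q d (x i')) ↔ ∀ i i', x i = x i') := by
  have hxq : ∀ i, x i < q ^ d := fun i => (hx i).trans_le hNq
  set X : ℕ → ℕ := Function.extend Fin.val x 0
  have hX : ∀ i : Fin k, X i = x i := Fin.val_injective.extend_apply x 0
  set D : ℕ → ℕ → ℤ := fun j n => (X n / q ^ j % q : ℕ)
  have hΔX : ∀ i, i + m + 1 < k → Δ_[1] ^[m + 1] (fun n => (X n : ℤ)) i = 0 :=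
    (isPP_intCast_iff_fwdDiff_iter_eq_zero _).1 (by simpa [hX] using hpp)
  have hΔD : ∀ i, i + m + 1 < k → ∀ j < d, Δ_[1] ^[m + 1] (D j) i = 0 := by
    intro i hi
    refine fwdDiff_iter_eq_zero_of_sum_pow_smul (q := q) (B := (q / 2 ^ m : ℕ)) ?_
      (fun j hj t ht => ?_) ?_
    · exact_mod_cast (Nat.mul_div_cancel' hdvd).le
    · have := hsmall ⟨i + t, by omega⟩ ⟨j, hj⟩
      simp only [baseDigits, ← hX] at this
      exact ⟨by positivity, Nat.cast_lt.2 this⟩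
    · rw [← hΔX i hi]
      refine fwdDiff_iter_congr 1 fun t ht => ?_
      simp only [smul_eq_mul, mul_one]
      have hlt : X (i + t) < q ^ d := (hX ⟨i + t, by omega⟩).symm ▸ hxq _
      simp only [Finset.sum_apply, Pi.smul_apply, smul_eq_mul, D]
      conv_rhs => rw [Nat.eq_sum_div_pow_mod_mul_pow hlt]
      push_cast
      exact sum_congr rfl fun j _ => mul_comm _ _
  refine ⟨fun j => ?_, ?_⟩
  · simpa [hX, D, baseDigits] using
      (isPP_intCast_iff_fwdDiff_iter_eq_zero (D j)).2 fun i hi => hΔD i hi j j.2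
  · exact ⟨fun h i i' => baseDigits_injOn q d (hxq i) (hxq i') (h i i'),
      fun h i i' => by rw [h i i']⟩

/-- if `(x 0, …, x (k-1)) ∈ {0,…,N-1}^k` is a `k`-term degree-`m` polynomial
progression, `2^m ∣ q`, `N ≤ q^d`, and every base-`q` digit of every `x i` is less than
`q / 2^m`, then the base-`q` representations form a `k`-term degree-`m` vector polynomial
progression, trivial iff the original progression is trivial. -/
theorem stmt3 (m k q d N : ℕ) (hm : 1 ≤ m) (hk : m + 2 ≤ k)
    (hq : 0 < q) (hd : 0 < d) (hN : 0 < N) (hdvd : 2 ^ m ∣ q) (hNq : N ≤ q ^ d)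
    (x : Fin k → ℕ) (hx : ∀ i, x i < N)
    (hpp : IsPP m (fun i => ((x i : ℕ) : ℝ)))
    (hsmall : ∀ i j, baseDigits q d (x i) j < q / 2 ^ m) :
    IsVecPP m (fun i j => ((baseDigits q d (x i) j : ℕ) : ℤ)) ∧
    ((∀ i i', baseDigits q d (x i) = baseDigits q d (x i')) ↔ ∀ i i', x i = x i') :=
  stmt3_general m k q d N hdvd hNq x hx hpp hsmall
end

section
/- Let q ≥ 3 be an odd integer, d ≥ 1 and t ≥ 1 integers, and let v_1, v_1', v_2, …, v_t ∈ {−(q−1)/2, …, (q−1)/2}^d. Let s be the carry string of v_1 + v_2 + ⋯ + v_t and let s' be the carry string of v_1' + v_2 + ⋯ + v_t. If s_j ≡ s'_j (mod 2) for every j ∈ {1, …, d}, then s = s'. -/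
/-- The carry string of a sum whose coordinatewise sums (0-indexed) are given by
`w : ℕ → ℤ`, for an odd modulus `q`.  `carryString q w j` is the carry `s_{j+1}`:
the unique integer `s` with `w j + s_{j-1} ∈ {s*q - (q-1)/2, …, s*q + (q-1)/2}`. -/
def carryString (q : ℤ) (w : ℕ → ℤ) : ℕ → ℤ
  | 0 => Int.fdiv (w 0 + (q - 1) / 2) q
  | j + 1 => Int.fdiv (w (j + 1) + carryString q w j + (q - 1) / 2) q

lemma Int.ediv_le_ediv_add_one_of_le_add {q x y : ℤ} (hq : 0 < q) (h : x ≤ y + q) :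
    x / q ≤ y / q + 1 := by
  simpa [Int.add_ediv_of_dvd_right (dvd_refl q), Int.ediv_self hq.ne'] using
    Int.ediv_le_ediv hq h

/-- The two quotients are at most one apart, so their parity decides whether they agree. -/
lemma Int.fdiv_eq_fdiv_of_emod_two_eq {q x y : ℤ} (hq : 0 < q) (hxy : |x - y| < q)
    (hpar : x.fdiv q % 2 = y.fdiv q % 2) : x.fdiv q = y.fdiv q := by
  rw [Int.fdiv_eq_ediv_of_nonneg _ hq.le, Int.fdiv_eq_ediv_of_nonneg _ hq.le] at hpar ⊢
  obtain ⟨hlo, hhi⟩ := abs_sub_lt_iff.mp hxy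
  have hx := Int.ediv_le_ediv_add_one_of_le_add hq (by omega : x ≤ y + q)
  have hy := Int.ediv_le_ediv_add_one_of_le_add hq (by omega : y ≤ x + q)
  omega

/-- Once the carries into coordinate `j` agree, the numbers rounded to the next carries differ
by `w j - w' j` only. -/
lemma carryString_eq_of_emod_two_eq {q : ℤ} (hq : 0 < q) {w w' : ℕ → ℤ} {d : ℕ}
    (hw : ∀ l < d, |w l - w' l| < q)
    (hpar : ∀ j < d, carryString q w j % 2 = carryString q w' j % 2) :
    ∀ j < d, carryString q w j = carryString q w' j := by
  intro j hj
  induction j with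
  | zero => exact Int.fdiv_eq_fdiv_of_emod_two_eq hq (by simpa using hw 0 hj) (hpar 0 hj)
  | succ n ih =>
    have hpar' := hpar (n + 1) hj
    simp only [carryString, ih (by omega)] at hpar' ⊢
    exact Int.fdiv_eq_fdiv_of_emod_two_eq hq (by simpa using hw (n + 1) hj) hpar'

lemma abs_sub_lt_of_mem_Icc_half {q a b : ℤ} (ha : a ∈ Set.Icc (-((q - 1) / 2)) ((q - 1) / 2))
    (hb : b ∈ Set.Icc (-((q - 1) / 2)) ((q - 1) / 2)) : |a - b| < q := by
  rw [Set.mem_Icc] at ha hb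
  rw [abs_sub_lt_iff]
  omega

theorem stmt4_general (q : ℤ) (hq : 3 ≤ q) (d t : ℕ) (ht : 1 ≤ t)
    (v : Fin t → ℕ → ℤ) (v₁' : ℕ → ℤ)
    (hv : ∀ i, ∀ j < d, v i j ∈ Set.Icc (-((q - 1) / 2)) ((q - 1) / 2))
    (hv' : ∀ j < d, v₁' j ∈ Set.Icc (-((q - 1) / 2)) ((q - 1) / 2))
    (hpar : ∀ j < d,
      carryString q (fun l => ∑ i, v i l) j % 2 =
        carryString q (fun l => v₁' l + ∑ i ∈ Finset.univ.erase (⟨0, ht⟩ : Fin t), v i l)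
          j % 2) :
    ∀ j < d,
      carryString q (fun l => ∑ i, v i l) j =
        carryString q (fun l => v₁' l + ∑ i ∈ Finset.univ.erase (⟨0, ht⟩ : Fin t), v i l)
          j := by
  refine carryString_eq_of_emod_two_eq (by omega) (fun l hl => ?_) hpar
  rw [← Finset.add_sum_erase _ _ (Finset.mem_univ (⟨0, ht⟩ : Fin t)), add_sub_add_right_eq_sub]
  exact abs_sub_lt_of_mem_Icc_half (hv _ l hl) (hv' l hl)

/-- if two sums `v₁ + v₂ + ⋯ + v_t` and `v₁' + v₂ + ⋯ + v_t` of vectors with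
entries in `{-(q-1)/2, …, (q-1)/2}` have carry strings agreeing modulo 2 in every
coordinate, then the carry strings are equal. -/
theorem stmt4 (q : ℤ) (hq : 3 ≤ q) (hodd : Odd q) (d t : ℕ) (hd : 1 ≤ d) (ht : 1 ≤ t)
    (v : Fin t → ℕ → ℤ) (v₁' : ℕ → ℤ)
    (hv : ∀ i, ∀ j < d, v i j ∈ Set.Icc (-((q - 1) / 2)) ((q - 1) / 2))
    (hv' : ∀ j < d, v₁' j ∈ Set.Icc (-((q - 1) / 2)) ((q - 1) / 2))
    (hpar : ∀ j < d,
      carryString q (fun l => ∑ i, v i l) j % 2 =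
        carryString q (fun l => v₁' l + ∑ i ∈ Finset.univ.erase (⟨0, ht⟩ : Fin t), v i l)
          j % 2) :
    ∀ j < d,
      carryString q (fun l => ∑ i, v i l) j =
        carryString q (fun l => v₁' l + ∑ i ∈ Finset.univ.erase (⟨0, ht⟩ : Fin t), v i l)
          j :=
  stmt4_general q hq d t ht v v₁' hv hv' hpar
end

section
/- Let m ≥ 1 and i ≥ 1 be integers and let N > 1 be a real number. Then for all real numbers q' > 1 and d' > 0 satisfying (q')^{d'} = N, one has m·d' + i · 2^{(i−1)/2} · ((2m)^{i−1} · 2·log₂ q')^{1/i} ≥ (i+1) · 2^{i/2} · (m^i · log₂ N)^{1/(i+1)}; moreover there exist real q' > 1 and d' > 0 with (q')^{d'} = N attaining equality, namely those for which m·d' = 2^{(i−1)/2} · ((2m)^{i−1} · 2·log₂ q')^{1/i} = 2^{i/2} · (m^i · log₂ N)^{1/(i+1)}. -/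
/-! With `y = log₂ q'` we have `d' y = log₂ N`, and the second summand `b` satisfies
`(m d') · b^i = a^(i+1)` for `a = 2^(i/2) (m^i log₂ N)^(1/(i+1))`. Weighted AM-GM,
`(i+1) (x b^i)^(1/(i+1)) ≤ x + i b`, gives the bound, with equality when `m d' = b = a`;
this is attained at `d' = a / m`, `q' = 2^(log₂ N / d')`. -/

open Real

lemma add_one_mul_le_add_mul_of_mul_pow_eq {a b c : ℝ} (n : ℕ) (ha : 0 ≤ a) (hb : 0 ≤ b)
    (hc : 0 ≤ c) (h : a * b ^ n = c ^ (n + 1)) : (n + 1) * c ≤ a + n * b := by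
  have hn : (0 : ℝ) < n + 1 := by positivity
  have hgeom : a ^ (1 / (n + 1 : ℝ)) * b ^ (n / (n + 1 : ℝ)) = c := by
    rw [div_eq_mul_one_div (n : ℝ), rpow_mul hb, rpow_natCast, ← mul_rpow ha (by positivity), h,
      ← Nat.cast_succ, one_div, pow_rpow_inv_natCast hc n.succ_ne_zero]
  have hamgm := geom_mean_le_arith_mean2_weighted (p₁ := a) (p₂ := b)
    (w₁ := 1 / (n + 1 : ℝ)) (w₂ := n / (n + 1 : ℝ)) (by positivity) (by positivity) ha hb
    (by rw [← add_div, add_comm, div_self hn.ne'])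
  rw [hgeom] at hamgm
  calc (n + 1) * c ≤ (n + 1) * (1 / (n + 1) * a + n / (n + 1) * b) := by gcongr
    _ = a + n * b := by field_simp

lemma two_rpow_natCast_div_two (n : ℕ) : (2 : ℝ) ^ ((n : ℝ) / 2) = √2 ^ n := by
  rw [sqrt_eq_rpow, ← rpow_natCast, ← rpow_mul zero_le_two, one_div_mul_eq_div]

lemma mul_rpow_one_div_pow (c : ℝ) {T : ℝ} (hT : 0 ≤ T) {n : ℕ} (hn : n ≠ 0) :
    (c * T ^ (1 / (n : ℝ))) ^ n = c ^ n * T := by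
  rw [mul_pow, one_div, rpow_inv_natCast_pow hT hn]

lemma mul_mul_pow_eq_pow_succ {m d y : ℝ} (hm : 0 ≤ m) (hd : 0 ≤ d) (hy : 0 ≤ y) {i : ℕ}
    (hi : 1 ≤ i) :
    m * d * (2 ^ (((i : ℝ) - 1) / 2) * ((2 * m) ^ (i - 1) * (2 * y)) ^ (1 / (i : ℝ))) ^ i =
      (2 ^ ((i : ℝ) / 2) * (m ^ i * (d * y)) ^ (1 / ((i : ℝ) + 1))) ^ (i + 1) := by
  obtain ⟨k, rfl⟩ := Nat.exists_eq_add_of_le' hi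
  have hk : ((k + 1 : ℕ) : ℝ) - 1 = (k : ℝ) := by push_cast; ring
  rw [hk, two_rpow_natCast_div_two, two_rpow_natCast_div_two,
    mul_rpow_one_div_pow _ (by positivity) (by omega),
    show ((k + 1 : ℕ) : ℝ) + 1 = ((k + 2 : ℕ) : ℝ) by push_cast; ring,
    mul_rpow_one_div_pow _ (by positivity) (by omega), Nat.add_sub_cancel]
  -- both sides are `√2 ^ (i (i + 1)) m^i d y`
  have hs : (2 : ℝ) = √2 ^ 2 := (sq_sqrt zero_le_two).symm
  generalize √2 = s at hs ⊢
  rw [hs]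
  ring

/-- for all reals `q' > 1`, `d' > 0` with `q'^d' = N`,
`m·d' + i·2^((i-1)/2)·((2m)^(i-1)·2·log₂ q')^(1/i) ≥ (i+1)·2^(i/2)·(m^i·log₂ N)^(1/(i+1))`,
and there exist `q' > 1`, `d' > 0` with `q'^d' = N` attaining equality, namely with
`m·d' = 2^((i-1)/2)·((2m)^(i-1)·2·log₂ q')^(1/i) = 2^(i/2)·(m^i·log₂ N)^(1/(i+1))`. -/
theorem stmt6 (m i : ℕ) (hm : 1 ≤ m) (hi : 1 ≤ i) (N : ℝ) (hN : 1 < N) :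
    (∀ q' d' : ℝ, 1 < q' → 0 < d' → q' ^ d' = N →
      ((i : ℝ) + 1) * (2 : ℝ) ^ ((i : ℝ) / 2) *
          (((m : ℝ) ^ (i : ℕ)) * Real.logb 2 N) ^ (1 / ((i : ℝ) + 1)) ≤
        (m : ℝ) * d' + (i : ℝ) * (2 : ℝ) ^ (((i : ℝ) - 1) / 2) *
          (((2 * (m : ℝ)) ^ (i - 1)) * (2 * Real.logb 2 q')) ^ (1 / (i : ℝ))) ∧
    (∃ q' d' : ℝ, 1 < q' ∧ 0 < d' ∧ q' ^ d' = N ∧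
      (m : ℝ) * d' =
        (2 : ℝ) ^ (((i : ℝ) - 1) / 2) *
          (((2 * (m : ℝ)) ^ (i - 1)) * (2 * Real.logb 2 q')) ^ (1 / (i : ℝ)) ∧
      (m : ℝ) * d' =
        (2 : ℝ) ^ ((i : ℝ) / 2) *
          (((m : ℝ) ^ (i : ℕ)) * Real.logb 2 N) ^ (1 / ((i : ℝ) + 1)) ∧
      (m : ℝ) * d' + (i : ℝ) * (2 : ℝ) ^ (((i : ℝ) - 1) / 2) *
          (((2 * (m : ℝ)) ^ (i - 1)) * (2 * Real.logb 2 q')) ^ (1 / (i : ℝ)) =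
        ((i : ℝ) + 1) * (2 : ℝ) ^ ((i : ℝ) / 2) *
          (((m : ℝ) ^ (i : ℕ)) * Real.logb 2 N) ^ (1 / ((i : ℝ) + 1))) := by
  have hm₀ : (0 : ℝ) < m := by exact_mod_cast hm
  have hL : 0 < logb 2 N := logb_pos one_lt_two hN
  constructor
  · intro q d hq hd hqd
    have hy : 0 < logb 2 q := logb_pos one_lt_two hq
    have hdy : d * logb 2 q = logb 2 N := by
      rw [← hqd, logb_rpow_eq_mul_logb_of_pos (by linarith)]
    have hprod := mul_mul_pow_eq_pow_succ hm₀.le hd.le hy.le hi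
    rw [hdy] at hprod
    have hamgm :=
      add_one_mul_le_add_mul_of_mul_pow_eq i (by positivity) (by positivity) (by positivity) hprod
    linarith
  · set A := (2 : ℝ) ^ ((i : ℝ) / 2) * ((m : ℝ) ^ i * logb 2 N) ^ (1 / ((i : ℝ) + 1))
    have hA : 0 < A := by positivity
    have hmd : (m : ℝ) * (A / m) = A := mul_div_cancel₀ A hm₀.ne'
    have hd : 0 < A / m := by positivity
    have hy : 0 < logb 2 N / (A / m) := by positivity
    have hb := mul_mul_pow_eq_pow_succ hm₀.le hd.le hy.le hi
    -- `A * b ^ i = A ^ (i + 1)` forces `b = A`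
    rw [hmd, mul_div_cancel₀ _ hd.ne', pow_succ', mul_right_inj' hA.ne',
      pow_left_inj₀ (by positivity) hA.le (by omega)] at hb
    refine ⟨2 ^ (logb 2 N / (A / m)), A / m, one_lt_rpow one_lt_two hy, hd, ?_, ?_, hmd, ?_⟩
    · rw [← rpow_mul zero_le_two, div_mul_cancel₀ _ hd.ne',
        rpow_logb two_pos (by norm_num) (by linarith)]
    · rw [logb_rpow two_pos (by norm_num), hmd, hb]
    · rw [logb_rpow two_pos (by norm_num), mul_assoc (i : ℝ), hb, hmd]
      ring
end

section
/- Let k ≥ 3 and N ≥ 1 be integers. If A ⊆ {1, …, N} is k-AP-free, then there exists a corner-free set Q ⊆ {1, …, k²N}^{k−1} with |Q| ≥ N^{k−2} · |A|. -/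
/-- `A` is `k`-AP-free: it contains no nontrivial `k`-term arithmetic progression. -/
def APFree (k : ℕ) (A : Set ℤ) : Prop :=
  ¬ ∃ (a δ : ℤ), δ ≠ 0 ∧ ∀ j : ℕ, j < k → a + (j : ℤ) * δ ∈ A

/-- `Q ⊆ ℤ^n` is corner-free: there do not exist `x ∈ Q` and `δ ≠ 0` with
`x + δ·e_j ∈ Q` for every `j`. -/
def CornerFree {n : ℕ} (Q : Set (Fin n → ℤ)) : Prop :=
  ¬ ∃ (x : Fin n → ℤ) (δ : ℤ), δ ≠ 0 ∧ x ∈ Q ∧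
    ∀ j : Fin n, Function.update x j (x j + δ) ∈ Q

/-!
Give the `k - 1` coordinates the weights `1, 2, …, k - 1` and let `Q` consist of the points
of the box whose weighted coordinate sum, suitably shifted, lies in `A`. Moving a point `x`
by `δ` along the `j`-th axis moves the weighted sum by `(j + 1) δ`, so a corner
`x, x + δ e₁, …, x + δ e_{k-1}` in `Q` would give the `k`-term progression `a, a + δ, …,
a + (k - 1) δ` in `A`. For the size, fix the `k - 2` coordinates of weight `≥ 2` freely in
`[1, N]` and each `a ∈ A`; the weight-one coordinate is then determined and stays in the box.
-/

open Finset

def weightedSum {n : ℕ} (x : Fin n → ℤ) : ℤ := ∑ i : Fin n, ((i : ℤ) + 1) * x i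

lemma weightedSum_update_add {n : ℕ} (x : Fin n → ℤ) (j : Fin n) (δ : ℤ) :
    weightedSum (Function.update x j (x j + δ)) = weightedSum x + ((j : ℤ) + 1) * δ := by
  have hupdate : Function.update x j (x j + δ) = x + Pi.single j δ := by
    ext i
    by_cases h : i = j <;> simp [h]
  simp [weightedSum, hupdate, mul_add, sum_add_distrib, Pi.single_apply]

lemma weightedSum_cons {n : ℕ} (x₀ : ℤ) (y : Fin n → ℤ) :
    weightedSum (Fin.cons x₀ y : Fin (n + 1) → ℤ) = x₀ + ∑ i : Fin n, ((i : ℤ) + 2) * y i := by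
  simp [weightedSum, Fin.sum_univ_succ, add_assoc, one_add_one_eq_two]

lemma CornerFree.mono {n : ℕ} {Q Q' : Set (Fin n → ℤ)} (hQ' : CornerFree Q') (h : Q ⊆ Q') :
    CornerFree Q :=
  fun ⟨x, δ, hδ, hx, hcorner⟩ => hQ' ⟨x, δ, hδ, h hx, fun j => h (hcorner j)⟩

lemma cornerFree_setOf_weightedSum_sub_mem {n : ℕ} {A : Set ℤ} (hA : APFree (n + 1) A) (s : ℤ) :
    CornerFree {x : Fin n → ℤ | weightedSum x - s ∈ A} := by
  rintro ⟨x, δ, hδ, hx, hcorner⟩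
  refine hA ⟨weightedSum x - s, δ, hδ, fun m hm => ?_⟩
  cases m with
  | zero => simpa using hx
  | succ m =>
    have h := hcorner ⟨m, by omega⟩
    simp only [Set.mem_ofPred_eq, weightedSum_update_add] at h
    convert h using 1
    push_cast
    ring

lemma sum_weight_mul_sub_mem_Icc {n : ℕ} {N : ℤ} {y : Fin n → ℤ} (hy : ∀ i, y i ∈ Icc 1 N) :
    ∑ i : Fin n, ((i : ℤ) + 2) * (N - y i) ∈ Icc 0 (n * (n + 1) * N) := by
  have hterm : ∀ i : Fin n, 0 ≤ N - y i ∧ N - y i ≤ N := fun i => by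
    have := mem_Icc.mp (hy i)
    constructor <;> linarith
  refine mem_Icc.mpr ⟨sum_nonneg fun i _ => mul_nonneg (by positivity) (hterm i).1, ?_⟩
  calc ∑ i : Fin n, ((i : ℤ) + 2) * (N - y i) ≤ ∑ _i : Fin n, (n + 1) * N := by
        refine sum_le_sum fun i _ => mul_le_mul ?_ (hterm i).2 (hterm i).1 (by positivity)
        have := i.isLt
        omega
    _ = n * (n + 1) * N := by simp [mul_assoc]

lemma card_mul_pow_le_card_filter_weightedSum (n N : ℕ) (A : Finset ℤ)
    (hA : A ⊆ Icc 1 (N : ℤ)) :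
    N ^ n * #A ≤ #{x ∈ Fintype.piFinset fun _ : Fin (n + 1) => Icc (1 : ℤ) ((n + 2) ^ 2 * N) |
      weightedSum x - ∑ i : Fin n, ((i : ℤ) + 2) * N ∈ A} := by
  let fill : ℤ × (Fin n → ℤ) → Fin (n + 1) → ℤ := fun p =>
    Fin.cons (p.1 + ∑ i : Fin n, ((i : ℤ) + 2) * (N - p.2 i)) p.2
  have hcard : #(A ×ˢ Fintype.piFinset fun _ : Fin n => Icc (1 : ℤ) N) = N ^ n * #A := by
    simp [mul_comm]
  rw [← hcard]
  refine card_le_card_of_injOn fill ?_ ?_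
  · rintro ⟨a, y⟩ hay
    obtain ⟨ha, hy⟩ := mem_product.mp hay
    have ha' := mem_Icc.mp (hA ha)
    have hy' := Fintype.mem_piFinset.mp hy
    have hS := mem_Icc.mp (sum_weight_mul_sub_mem_Icc hy')
    have hbox : (1 : ℤ) ≤ ((n : ℤ) + 2) ^ 2 := by nlinarith
    rw [mem_coe, mem_filter, Fin.mem_piFinset_iff_zero_tail]
    simp only [fill, Fin.cons_zero, Fin.tail_cons, weightedSum_cons, mem_Icc,
      Fintype.mem_piFinset]
    refine ⟨⟨⟨by linarith, by nlinarith⟩, fun i => ?_⟩, ?_⟩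
    · have := mem_Icc.mp (hy' i)
      exact mem_Icc.mpr ⟨this.1, by nlinarith⟩
    · convert ha using 1
      simp only [mul_sub, sum_sub_distrib]
      ring
  · rintro ⟨a, y⟩ - ⟨b, z⟩ - h
    obtain ⟨h0, rfl⟩ := Fin.cons_injective2 h
    simpa using h0

theorem exists_cornerFree_card_ge_of_apFree (n N : ℕ) (A : Finset ℤ)
    (hA : A ⊆ Icc 1 (N : ℤ)) (hAP : APFree (n + 2) (A : Set ℤ)) :
    ∃ Q : Finset (Fin (n + 1) → ℤ),
      Q ⊆ Fintype.piFinset (fun _ => Icc (1 : ℤ) (((n : ℤ) + 2) ^ 2 * N)) ∧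
      CornerFree (Q : Set (Fin (n + 1) → ℤ)) ∧ N ^ n * #A ≤ #Q := by
  refine ⟨_, filter_subset _ _, ?_, card_mul_pow_le_card_filter_weightedSum n N A hA⟩
  exact (cornerFree_setOf_weightedSum_sub_mem hAP _).mono fun x hx => (mem_filter.mp hx).2

theorem stmt7_general (k N : ℕ) (hk : 3 ≤ k) (A : Finset ℤ)
    (hA : A ⊆ Finset.Icc 1 (N : ℤ)) (hAP : APFree k (↑A : Set ℤ)) :
    ∃ Q : Finset (Fin (k - 1) → ℤ),
      Q ⊆ Fintype.piFinset (fun _ => Finset.Icc (1 : ℤ) ((k : ℤ) ^ 2 * N)) ∧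
      CornerFree (↑Q : Set (Fin (k - 1) → ℤ)) ∧
      N ^ (k - 2) * A.card ≤ Q.card := by
  obtain ⟨n, rfl⟩ : ∃ n, k = n + 2 := ⟨k - 2, by omega⟩
  simpa using exists_cornerFree_card_ge_of_apFree n N A hA hAP

/-- a `k`-AP-free set `A ⊆ {1, …, N}` yields a corner-free set
`Q ⊆ {1, …, k²N}^(k-1)` with `|Q| ≥ N^(k-2) · |A|`. -/
theorem stmt7 (k N : ℕ) (hk : 3 ≤ k) (hN : 1 ≤ N) (A : Finset ℤ)
    (hA : A ⊆ Finset.Icc 1 (N : ℤ)) (hAP : APFree k (↑A : Set ℤ)) :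
    ∃ Q : Finset (Fin (k - 1) → ℤ),
      Q ⊆ Fintype.piFinset (fun _ => Finset.Icc (1 : ℤ) ((k : ℤ) ^ 2 * N)) ∧
      CornerFree (↑Q : Set (Fin (k - 1) → ℤ)) ∧
      N ^ (k - 2) * A.card ≤ Q.card :=
  stmt7_general k N hk A hA hAP
end

section
/- Let k ≥ 3 and N ≥ k² be integers and set M = ⌊N/k²⌋. Suppose there is a coloring χ : {1, …, N} → C (for a finite set of colors C) such that there is no monochromatic nontrivial k-term arithmetic progression, i.e. no integers x and δ ≠ 0 with x, x+δ, …, x+(k−1)δ ∈ {1, …, N} all receiving the same color. Then there is a coloring χ' : {1, …, M}^{k−1} → C such that there is no monochromatic nontrivial (k−1)-dimensional corner, i.e. no x ∈ {1, …, M}^{k−1} and integer δ ≠ 0 such that x and all points x + δ·e_j for j ∈ {1, …, k−1} lie in {1, …, M}^{k−1} and receive the same color (where e_j is the j-th standard basis vector). -/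
/-- if `{1, …, N}` is colored (by a finite set of colors `C`) with no
monochromatic nontrivial `k`-term arithmetic progression, then `{1, …, M}^(k-1)`
with `M = ⌊N/k²⌋` can be colored by `C` with no monochromatic nontrivial
`(k-1)`-dimensional corner. -/
theorem stmt8 (k N : ℕ) (hk : 3 ≤ k) (hN : k ^ 2 ≤ N)
    (C : Type) [Finite C] (χ : ℤ → C)
    (hχ : ¬ ∃ (a δ : ℤ), δ ≠ 0 ∧
      (∀ j : ℕ, j < k → a + (j : ℤ) * δ ∈ Finset.Icc (1 : ℤ) (N : ℤ)) ∧
      (∀ j : ℕ, j < k → χ (a + (j : ℤ) * δ) = χ a)) :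
    ∃ χ' : (Fin (k - 1) → ℤ) → C,
      ¬ ∃ (x : Fin (k - 1) → ℤ) (δ : ℤ), δ ≠ 0 ∧
        (∀ j, x j ∈ Finset.Icc (1 : ℤ) ((N / k ^ 2 : ℕ) : ℤ)) ∧
        (∀ j j', Function.update x j (x j + δ) j' ∈ Finset.Icc (1 : ℤ) ((N / k ^ 2 : ℕ) : ℤ)) ∧
        (∀ j, χ' (Function.update x j (x j + δ)) = χ' x) := by
  set M : ℤ := ((N / k ^ 2 : ℕ) : ℤ) with hMdef
  have hM0 : 0 ≤ M := Int.ofNat_nonneg _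
  have hMN : (k : ℤ) ^ 2 * M ≤ (N : ℤ) := by
    have h2 : k ^ 2 * (N / k ^ 2) ≤ N := Nat.mul_div_le N (k ^ 2)
    rw [hMdef]; exact_mod_cast h2
  -- the bound lemma
  have bound : ∀ y : Fin (k - 1) → ℤ, (∀ i, y i ∈ Finset.Icc (1 : ℤ) M) →
      (∑ i : Fin (k - 1), ((i : ℤ) + 1) * y i) ∈ Finset.Icc (1 : ℤ) (N : ℤ) := by
    intro y hy
    simp only [Finset.mem_Icc] at hy ⊢
    have hk1 : 1 ≤ k - 1 := by omega
    constructor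
    · have h1 : ∀ i ∈ Finset.univ, (1 : ℤ) ≤ ((i : Fin (k-1)) : ℤ) * 1 + 1 * y i := by
        intro i _
        have := (hy i).1
        have hi : (0 : ℤ) ≤ (i : ℤ) := Int.ofNat_nonneg _
        nlinarith
      calc (1 : ℤ) ≤ ∑ _i : Fin (k - 1), (1 : ℤ) := by
            simp only [Finset.sum_const, Finset.card_univ, Fintype.card_fin, nsmul_eq_mul,
              mul_one]
            exact_mod_cast hk1
        _ ≤ ∑ i : Fin (k - 1), ((i : ℤ) + 1) * y i := by
            apply Finset.sum_le_sum
            intro i _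
            have := (hy i).1
            have hi : (0 : ℤ) ≤ (i : ℤ) := Int.ofNat_nonneg _
            nlinarith
    · have step : ∀ i ∈ (Finset.univ : Finset (Fin (k - 1))),
          ((i : ℤ) + 1) * y i ≤ (k : ℤ) * M := by
        intro i _
        have hi : (i : ℕ) < k - 1 := i.isLt
        have hi' : (i : ℤ) + 1 ≤ (k : ℤ) := by exact_mod_cast by omega
        have := (hy i).1; have := (hy i).2
        have hi0 : (0 : ℤ) ≤ (i : ℤ) + 1 := by positivity
        nlinarith
      calc (∑ i : Fin (k - 1), ((i : ℤ) + 1) * y i)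
          ≤ ∑ _i : Fin (k - 1), (k : ℤ) * M := Finset.sum_le_sum step
        _ = ((k - 1 : ℕ) : ℤ) * ((k : ℤ) * M) := by
            simp [Finset.sum_const, Finset.card_univ, mul_comm]
        _ ≤ (N : ℤ) := by
            have hk' : ((k - 1 : ℕ) : ℤ) ≤ (k : ℤ) := by exact_mod_cast Nat.sub_le k 1
            have hkM : 0 ≤ (k : ℤ) * M := by positivity
            nlinarith
  refine ⟨fun x => χ (∑ i : Fin (k - 1), ((i : ℤ) + 1) * x i), ?_⟩
  rintro ⟨x, δ, hδ, hx, hmem, hcol⟩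
  set a : ℤ := ∑ i : Fin (k - 1), ((i : ℤ) + 1) * x i with ha
  have key : ∀ j : Fin (k - 1),
      (∑ i : Fin (k - 1), ((i : ℤ) + 1) * (Function.update x j (x j + δ)) i)
        = a + ((j : ℤ) + 1) * δ := by
    intro j
    have hpt : ∀ i : Fin (k - 1), ((i : ℤ) + 1) * Function.update x j (x j + δ) i
        = ((i : ℤ) + 1) * x i + (if i = j then ((i : ℤ) + 1) * δ else 0) := by
      intro i
      rcases eq_or_ne i j with rfl | h
      · simp [Function.update_self]; ring
      · simp [Function.update_of_ne h, h]
    rw [Finset.sum_congr rfl fun i _ => hpt i, Finset.sum_add_distrib]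
    simp [ha]
  apply hχ
  refine ⟨a, δ, hδ, ?_, ?_⟩
  · intro j hj
    rcases Nat.eq_zero_or_pos j with rfl | hj1
    · simpa using bound x hx
    · set i : Fin (k - 1) := ⟨j - 1, by omega⟩ with hi
      have hji : ((i : ℕ) : ℤ) + 1 = (j : ℤ) := by
        have : (i : ℕ) = j - 1 := rfl
        rw [this]; omega
      rw [show a + (j : ℤ) * δ = a + ((i : ℤ) + 1) * δ by rw [hji], ← key i]
      exact bound _ (fun j' => hmem i j')
  · intro j hj
    rcases Nat.eq_zero_or_pos j with rfl | hj1
    · simp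
    · set i : Fin (k - 1) := ⟨j - 1, by omega⟩ with hi
      have hji : ((i : ℕ) : ℤ) + 1 = (j : ℤ) := by
        have : (i : ℕ) = j - 1 := rfl
        rw [this]; omega
      rw [show a + (j : ℤ) * δ = a + ((i : ℤ) + 1) * δ by rw [hji], ← key i]
      exact hcol i
end

section
/- Let N ≥ 2 be an integer and let A ⊆ {1, …, N} be nonempty. Then there exist an integer ℓ with 1 ≤ ℓ ≤ ⌈2·N·log₂ N / |A|⌉ and integers t_1, …, t_ℓ ∈ {−N, …, N} such that {1, …, N} ⊆ ∪_{i=1}^ℓ (t_i + A), where t + A = { t + a : a ∈ A }. -/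
/-!
Each `r ∈ R` lies in `t + A` for exactly `|A|` shifts `t ∈ S ⊇ R - A`, so by averaging some
translate of `A` covers a `|A|/|S|` fraction of `R`. Taking such translates greedily with
`R ⊆ [1, N]` and `S = [-N, N]`, after `ℓ` steps at most
`N (1 - |A|/(2N+1))^ℓ ≤ N exp(-ℓ|A|/(2N+1))` points are uncovered, and this is `< 1` for
`ℓ ≥ 2N log₂ N / |A|` because `2N/(2N+1) ≥ 4/5 > log 2`.
-/

open Finset Pointwise

namespace Finset

variable {G : Type*} [AddCommGroup G] [DecidableEq G] {A R S : Finset G}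

lemma sum_card_inter_vadd_finset (hS : R - A ⊆ S) :
    ∑ t ∈ S, #(R ∩ (t +ᵥ A)) = #R * #A := by
  have fiber (r : G) (hr : r ∈ R) : {t ∈ S | r ∈ t +ᵥ A} = A.image (r - ·) := by
    ext t
    simp only [mem_filter, mem_vadd_finset, mem_image, vadd_eq_add]
    constructor
    · rintro ⟨-, a, ha, rfl⟩
      exact ⟨a, ha, by abel⟩
    · rintro ⟨a, ha, rfl⟩
      exact ⟨hS (sub_mem_sub hr ha), a, ha, by abel⟩
  calc ∑ t ∈ S, #(R ∩ (t +ᵥ A))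
      = ∑ r ∈ R, #{t ∈ S | r ∈ t +ᵥ A} := by
        simp only [← filter_mem_eq_inter, card_filter]
        exact sum_comm
    _ = #R * #A := by
        rw [sum_congr rfl fun r hr ↦ by
          rw [fiber r hr, card_image_of_injective _ sub_right_injective], sum_const, smul_eq_mul]

lemma exists_card_mul_le_card_mul_card_inter_vadd (hS₀ : S.Nonempty) (hS : R - A ⊆ S) :
    ∃ t ∈ S, #A * #R ≤ #S * #(R ∩ (t +ᵥ A)) :=
  exists_le_of_sum_le hS₀ <| by
    rw [sum_const, ← mul_sum, sum_card_inter_vadd_finset hS, smul_eq_mul, mul_comm #R]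

lemma exists_translates_card_uncovered_mul_le (hS₀ : S.Nonempty) (k : ℕ) (hS : R - A ⊆ S) :
    ∃ t : Fin k → G, (∀ i, t i ∈ S) ∧
      #{x ∈ R | ∀ i, x ∉ t i +ᵥ A} * #S ^ k ≤ #R * (#S - #A) ^ k := by
  induction k generalizing R with
  | zero => exact ⟨Fin.elim0, fun i ↦ i.elim0, by simp⟩
  | succ k ih =>
    obtain ⟨t₀, ht₀, hcover⟩ := exists_card_mul_le_card_mul_card_inter_vadd hS₀ hS
    obtain ⟨t, ht, hrest⟩ :=
      ih (R := R \ (t₀ +ᵥ A)) ((sub_subset_sub_right sdiff_subset).trans hS)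
    refine ⟨Fin.cons t₀ t, Fin.forall_fin_succ.2 ⟨ht₀, ht⟩, ?_⟩
    have hfilter : {x ∈ R | ∀ i, x ∉ (Fin.cons t₀ t : Fin (k + 1) → G) i +ᵥ A} =
        {x ∈ R \ (t₀ +ᵥ A) | ∀ i, x ∉ t i +ᵥ A} := by
      ext x
      simp [Fin.forall_fin_succ, and_assoc]
    have hsdiff : #(R \ (t₀ +ᵥ A)) * #S ≤ #R * (#S - #A) :=
      calc #(R \ (t₀ +ᵥ A)) * #S = #R * #S - #(R ∩ (t₀ +ᵥ A)) * #S := by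
            rw [← card_inter_add_card_sdiff R (t₀ +ᵥ A), add_mul, Nat.add_sub_cancel_left]
        _ ≤ #R * #S - #R * #A := by
            rw [mul_comm #R #A, mul_comm #(R ∩ _)]
            exact tsub_le_tsub_left hcover _
        _ = #R * (#S - #A) := (Nat.mul_sub _ _ _).symm
    calc #{x ∈ R | ∀ i, x ∉ (Fin.cons t₀ t : Fin (k + 1) → G) i +ᵥ A} * #S ^ (k + 1)
        = #{x ∈ R \ (t₀ +ᵥ A) | ∀ i, x ∉ t i +ᵥ A} * #S ^ k * #S := by
          rw [hfilter, pow_succ, mul_assoc]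
      _ ≤ #(R \ (t₀ +ᵥ A)) * (#S - #A) ^ k * #S := Nat.mul_le_mul_right _ hrest
      _ = #(R \ (t₀ +ᵥ A)) * #S * (#S - #A) ^ k := by ring
      _ ≤ #R * (#S - #A) * (#S - #A) ^ k := Nat.mul_le_mul_right _ hsdiff
      _ = #R * (#S - #A) ^ (k + 1) := by ring

end Finset

namespace Real

lemma mul_one_sub_pow_lt_one {x δ : ℝ} {ℓ : ℕ} (hx : 0 < x) (hδ : δ ≤ 1)
    (h : log x < δ * ℓ) : x * (1 - δ) ^ ℓ < 1 :=
  calc x * (1 - δ) ^ ℓ ≤ x * exp (-δ) ^ ℓ := by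
        gcongr
        exact one_sub_le_exp_neg δ
    _ = x * exp (-(δ * ℓ)) := by rw [← exp_nat_mul]; ring_nf
    _ < x * exp (-log x) := by gcongr
    _ = 1 := by rw [exp_neg, exp_log hx, mul_inv_cancel₀ hx.ne']

lemma log_lt_div_mul_of_two_mul_logb_div_le {N a ℓ : ℝ} (hN : 2 ≤ N) (ha : 0 < a)
    (hℓ : 2 * N * logb 2 N / a ≤ ℓ) : log N < a / (2 * N + 1) * ℓ := by
  have hlog2_pos : 0 < log 2 := log_pos one_lt_two
  have hlog2 : log 2 < 2 * N / (2 * N + 1) := by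
    rw [lt_div_iff₀ (by linarith)]
    nlinarith [log_two_lt_d9]
  calc log N = log 2 * (log N / log 2) := (mul_div_cancel₀ _ hlog2_pos.ne').symm
    _ < 2 * N / (2 * N + 1) * (log N / log 2) :=
        mul_lt_mul_of_pos_right hlog2 (div_pos (log_pos (by linarith)) hlog2_pos)
    _ = a / (2 * N + 1) * (2 * N * logb 2 N / a) := by rw [logb]; field_simp
    _ ≤ a / (2 * N + 1) * ℓ := by gcongr

end Real

lemma Nat.mul_sub_pow_lt_pow {n m a ℓ : ℕ} (hn : 0 < n) (hm : 0 < m) (ha : a ≤ m)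
    (h : Real.log n < a / m * ℓ) : n * (m - a) ^ ℓ < m ^ ℓ := by
  have hmR : (0 : ℝ) < m := by exact_mod_cast hm
  have hlt := Real.mul_one_sub_pow_lt_one (by exact_mod_cast hn)
    (div_le_one_of_le₀ (by exact_mod_cast ha) hmR.le) h
  have hsplit : ((n * (m - a) ^ ℓ : ℕ) : ℝ) = m ^ ℓ * (n * (1 - a / m) ^ ℓ) := by
    push_cast [ha]
    rw [mul_left_comm, ← mul_pow, mul_one_sub, mul_div_cancel₀ _ hmR.ne']
  have hltR : ((n * (m - a) ^ ℓ : ℕ) : ℝ) < m ^ ℓ := by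
    rw [hsplit]
    exact mul_lt_of_lt_one_right (pow_pos hmR ℓ) hlt
  exact_mod_cast hltR

/-- any nonempty `A ⊆ {1, …, N}` has at most `⌈2·N·log₂ N / |A|⌉`
translates, with shifts in `{-N, …, N}`, covering `{1, …, N}`. -/
theorem stmt9 (N : ℕ) (hN : 2 ≤ N) (A : Finset ℤ)
    (hA : A ⊆ Finset.Icc 1 (N : ℤ)) (hne : A.Nonempty) :
    ∃ (ℓ : ℕ) (t : Fin ℓ → ℤ), 1 ≤ ℓ ∧
      (ℓ : ℤ) ≤ ⌈(2 * (N : ℝ) * Real.logb 2 N) / (A.card : ℝ)⌉ ∧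
      (∀ i, t i ∈ Finset.Icc (-(N : ℤ)) (N : ℤ)) ∧
      (∀ x ∈ Finset.Icc (1 : ℤ) (N : ℤ), ∃ i, ∃ a ∈ A, x = t i + a) := by
  set c := 2 * (N : ℝ) * Real.logb 2 N / #A
  have hNR : (2 : ℝ) ≤ N := by exact_mod_cast hN
  have hA_pos : (0 : ℝ) < #A := by exact_mod_cast hne.card_pos
  have hc : 0 < c := by
    have := Real.logb_pos one_lt_two (by linarith : (1 : ℝ) < N)
    positivity
  have hA_le : #A ≤ N := by simpa using card_le_card hA
  have hdiff : Icc 1 (N : ℤ) - A ⊆ Icc (-N) N := by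
    intro x hx
    obtain ⟨r, hr, a, ha, rfl⟩ := mem_sub.mp hx
    have := hA ha
    simp only [mem_Icc] at hr this ⊢
    omega
  obtain ⟨t, ht, huncovered⟩ :=
    exists_translates_card_uncovered_mul_le ⟨0, by simp⟩ ⌈c⌉₊ hdiff
  have hS : #(Icc (-N : ℤ) N) = 2 * N + 1 := by simp; omega
  have hlt : N * (2 * N + 1 - #A) ^ ⌈c⌉₊ < (2 * N + 1) ^ ⌈c⌉₊ :=
    Nat.mul_sub_pow_lt_pow (by omega) (by omega) (by omega) <| by
      push_cast
      exact Real.log_lt_div_mul_of_two_mul_logb_div_le hNR hA_pos (Nat.le_ceil c)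
  have hempty : {x ∈ Icc 1 (N : ℤ) | ∀ i, x ∉ t i +ᵥ A} = ∅ := by
    rw [hS, Int.card_Icc, add_sub_cancel_right, Int.toNat_natCast] at huncovered
    rw [← card_eq_zero, ← Nat.lt_one_iff]
    exact Nat.lt_of_mul_lt_mul_right (by rw [one_mul]; exact huncovered.trans_lt hlt)
  refine ⟨⌈c⌉₊, t, Nat.one_le_ceil_iff.2 hc, (Int.natCast_ceil_eq_ceil hc.le).le, ht, ?_⟩
  intro x hx
  by_contra! hx'
  refine filter_eq_empty_iff.mp hempty hx fun i hi ↦ ?_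
  obtain ⟨a, ha, rfl⟩ := mem_vadd_finset.mp hi
  exact hx' i a ha rfl
end

section
/- Let k ≥ 3 and N ≥ 2 be integers. If there exists a k-AP-free set A ⊆ {1, …, N} with |A| = r ≥ 1, then there exists a coloring of {1, …, N} with at most ⌈2·N·log₂ N / r⌉ colors such that no nontrivial k-term arithmetic progression is monochromatic, i.e. there are no integers x and δ ≠ 0 with x, x+δ, …, x+(k−1)δ ∈ {1, …, N} all receiving the same color. -/
open Finset
open scoped Pointwise

theorem APFree.vadd {k : ℕ} {A : Set ℤ} (hA : APFree k A) (c : ℤ) : APFree k (c +ᵥ A) := by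
  rintro ⟨a, δ, hδ, hAP⟩
  refine hA ⟨a - c, δ, hδ, fun j hj => ?_⟩
  have := Set.mem_vadd_set_iff_neg_vadd_mem.1 (hAP j hj)
  rwa [vadd_eq_add, neg_add_eq_sub, add_sub_right_comm] at this

theorem exists_coloring_of_apFree_cover {k : ℕ} (hk : 0 < k) (S : Set ℤ) (l : List (Set ℤ))
    (hl : ∀ B ∈ l, APFree k B) (hS : ∀ x ∈ S, ∃ B ∈ l, x ∈ B) :
    ∃ χ : ℤ → ℕ, (∀ x ∈ S, χ x < l.length) ∧
      ¬ ∃ (a δ : ℤ), δ ≠ 0 ∧ (∀ j : ℕ, j < k → a + (j : ℤ) * δ ∈ S) ∧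
        (∀ j : ℕ, j < k → χ (a + (j : ℤ) * δ) = χ a) := by
  classical
  have hlt : ∀ x ∈ S, l.findIdx (fun B => x ∈ B) < l.length := fun x hx =>
    List.findIdx_lt_length_of_exists (by simpa using hS x hx)
  refine ⟨fun x => l.findIdx (fun B => x ∈ B), hlt, ?_⟩
  rintro ⟨a, δ, hδ, hmem, hmono⟩
  have ha : a ∈ S := by simpa using hmem 0 hk
  -- colour `i < l.length` is only given to points of `l[i]`
  refine hl _ (List.getElem_mem (hlt a ha)) ⟨a, δ, hδ, fun j hj => ?_⟩
  have hfind := List.findIdx_getElem (w := hlt _ (hmem j hj))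
  simp only [decide_eq_true_eq] at hfind
  simpa only [hmono j hj] using hfind

theorem Finset.exists_card_mul_card_le_card_sub_mul_card_inter_vadd {G : Type*} [AddGroup G]
    [DecidableEq G] (U A : Finset G) :
    ∃ c : G, #U * #A ≤ #(U - A) * #(U ∩ (c +ᵥ A)) := by
  rcases (U - A).eq_empty_or_nonempty with hUA | hUA
  · refine ⟨0, ?_⟩
    rw [sub_eq_empty] at hUA
    rcases hUA with rfl | rfl <;> simp
  -- double count the pairs `(u, a) ∈ U × A` according to `u - a`
  have hsum : #U * #A = ∑ c ∈ U - A, #(U ∩ (c +ᵥ A)) := by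
    rw [← card_product, card_eq_sum_card_fiberwise (f := fun p : G × G => p.1 - p.2)
      (fun p hp => sub_mem_sub (mem_product.1 hp).1 (mem_product.1 hp).2)]
    exact sum_congr rfl fun c _ => (card_sub_eq U A c).trans (card_inter_vadd U A c).symm
  obtain ⟨c, -, hc⟩ := exists_le_of_sum_le hUA
    (f := fun _ => #U * #A) (g := fun c => #(U - A) * #(U ∩ (c +ᵥ A)))
    (by rw [sum_const, smul_eq_mul, ← mul_sum, ← hsum])
  exact ⟨c, hc⟩

theorem Finset.exists_list_card_uncovered_le {α ι : Type*} [DecidableEq α] (F : ι → Finset α)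
    {p : ℝ} (hp : p ≤ 1) (t : ℕ) :
    ∀ S : Finset α, (∀ U ⊆ S, ∃ i, p * #U ≤ #(U ∩ F i)) →
      ∃ l : List ι, l.length = t ∧ (#{x ∈ S | ∀ i ∈ l, x ∉ F i} : ℝ) ≤ (1 - p) ^ t * #S := by
  induction t with
  | zero => exact fun S _ => ⟨[], rfl, by simp⟩
  | succ t ih =>
    intro S hS
    obtain ⟨i, hi⟩ := hS S subset_rfl
    obtain ⟨l, hlen, hl⟩ := ih (S \ F i) fun U hU => hS U (hU.trans sdiff_subset)
    have hstep : (#(S \ F i) : ℝ) ≤ (1 - p) * #S := by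
      have := card_sdiff_add_card_inter S (F i)
      have : (#(S \ F i) : ℝ) + #(S ∩ F i) = #S := by exact_mod_cast this
      linarith
    refine ⟨i :: l, by simp [hlen], ?_⟩
    have hfilter : {x ∈ S | ∀ j ∈ i :: l, x ∉ F j} = {x ∈ S \ F i | ∀ j ∈ l, x ∉ F j} := by
      ext x
      simp [and_assoc]
    calc (#{x ∈ S | ∀ j ∈ i :: l, x ∉ F j} : ℝ) ≤ (1 - p) ^ t * #(S \ F i) := by rwa [hfilter]
      _ ≤ (1 - p) ^ t * ((1 - p) * #S) := by gcongr
      _ = (1 - p) ^ (t + 1) * #S := by ring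

theorem exists_mul_card_le_card_inter_vadd_of_subset_Icc {N : ℕ} {U A : Finset ℤ}
    (hU : U ⊆ Icc 1 (N : ℤ)) (hA : A ⊆ Icc 1 (N : ℤ)) :
    ∃ c : ℤ, (#A : ℝ) / (2 * N - 1) * #U ≤ #(U ∩ (c +ᵥ A)) := by
  obtain ⟨c, hc⟩ := exists_card_mul_card_le_card_sub_mul_card_inter_vadd U A
  refine ⟨c, ?_⟩
  rcases U.eq_empty_or_nonempty with rfl | ⟨u, hu⟩
  · simp
  have hN : 1 ≤ N := by have := mem_Icc.1 (hU hu); omega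
  have hUA : (#(U - A) : ℤ) ≤ 2 * N - 1 := by
    have hsub : U - A ⊆ Icc (1 - N : ℤ) (N - 1) := fun d hd => by
      obtain ⟨u, hu, a, ha, rfl⟩ := mem_sub.1 hd
      have := mem_Icc.1 (hU hu)
      have := mem_Icc.1 (hA ha)
      rw [mem_Icc]
      omega
    have := card_le_card hsub
    rw [Int.card_Icc] at this
    omega
  have hN' : (1 : ℝ) ≤ N := by exact_mod_cast hN
  rw [div_mul_eq_mul_div, div_le_iff₀ (by linarith), mul_comm (#A : ℝ)]
  calc (#U * #A : ℝ) ≤ #(U - A) * #(U ∩ (c +ᵥ A)) := by exact_mod_cast hc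
    _ ≤ (2 * N - 1) * #(U ∩ (c +ᵥ A)) := by gcongr; exact_mod_cast hUA
    _ = _ := mul_comm _ _

theorem Real.mul_one_sub_pow_lt_one_s10 {x p : ℝ} {t : ℕ} (hx : 0 < x) (hp : p ≤ 1)
    (ht : Real.log x < p * t) : x * (1 - p) ^ t < 1 :=
  calc x * (1 - p) ^ t ≤ x * Real.exp (-p) ^ t := by
        gcongr
        linarith [Real.add_one_le_exp (-p)]
    _ = x * Real.exp (-(p * t)) := by rw [← Real.exp_nat_mul]; ring_nf
    _ < x * Real.exp (-Real.log x) := by gcongr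
    _ = 1 := by rw [Real.exp_neg, Real.exp_log hx, mul_inv_cancel₀ hx.ne']

theorem Real.log_lt_div_mul_of_two_mul_logb_div_le_s10 {N r t : ℝ} (hN : 1 < N) (hr : 0 < r)
    (ht : 2 * N * Real.logb 2 N / r ≤ t) : Real.log N < r / (2 * N - 1) * t := by
  have hlog : 0 < Real.log N := Real.log_pos hN
  have hlogb : Real.log N < Real.logb 2 N := by
    rw [Real.logb, lt_div_iff₀ (Real.log_pos one_lt_two)]
    nlinarith [Real.log_two_lt_d9]
  calc Real.log N < 2 * N * Real.logb 2 N / (2 * N - 1) := by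
        rw [lt_div_iff₀ (by linarith)]
        nlinarith
    _ = r / (2 * N - 1) * (2 * N * Real.logb 2 N / r) := by field_simp
    _ ≤ r / (2 * N - 1) * t := mul_le_mul_of_nonneg_left ht (div_nonneg hr.le (by linarith))

/-- if there is a `k`-AP-free `A ⊆ {1, …, N}` of size `r ≥ 1`, then
`{1, …, N}` can be colored with at most `⌈2·N·log₂ N / r⌉` colors (colors being the
naturals below that bound) such that no nontrivial `k`-term arithmetic progression is
monochromatic. -/
theorem stmt10 (k N r : ℕ) (hk : 3 ≤ k) (hN : 2 ≤ N) (hr : 1 ≤ r)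
    (A : Finset ℤ) (hA : A ⊆ Finset.Icc 1 (N : ℤ)) (hcard : A.card = r)
    (hAP : APFree k (↑A : Set ℤ)) :
    ∃ χ : ℤ → ℕ,
      (∀ x ∈ Finset.Icc (1 : ℤ) (N : ℤ),
        (χ x : ℤ) < ⌈(2 * (N : ℝ) * Real.logb 2 N) / (r : ℝ)⌉) ∧
      ¬ ∃ (a δ : ℤ), δ ≠ 0 ∧
        (∀ j : ℕ, j < k → a + (j : ℤ) * δ ∈ Finset.Icc (1 : ℤ) (N : ℤ)) ∧
        (∀ j : ℕ, j < k → χ (a + (j : ℤ) * δ) = χ a) := by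
  set t := ⌈(2 * (N : ℝ) * Real.logb 2 N) / (r : ℝ)⌉.toNat
  have ht : 2 * (N : ℝ) * Real.logb 2 N / r ≤ t :=
    (Int.le_ceil _).trans ((Int.cast_le.2 (Int.self_le_toNat _)).trans_eq (Int.cast_natCast _))
  have hIcc : #(Icc 1 (N : ℤ)) = N := by simp
  have hN' : (1 : ℝ) < N := by exact_mod_cast hN
  have hrN : (r : ℝ) ≤ N := by exact_mod_cast hcard ▸ hIcc ▸ card_le_card hA
  have hp : (r : ℝ) / (2 * N - 1) ≤ 1 := by rw [div_le_one (by linarith)]; linarith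
  obtain ⟨l, hlen, hl⟩ := exists_list_card_uncovered_le (fun c : ℤ => c +ᵥ A) hp t (Icc 1 N)
    fun U hU => hcard ▸ exists_mul_card_le_card_inter_vadd_of_subset_Icc hU hA
  have hcover : ∀ x ∈ Icc 1 (N : ℤ), ∃ c ∈ l, x ∈ c +ᵥ A := by
    have hlt := Real.mul_one_sub_pow_lt_one_s10 (by positivity) hp
      (Real.log_lt_div_mul_of_two_mul_logb_div_le_s10 hN' (by exact_mod_cast hr) ht)
    rw [hIcc] at hl
    have huncovered : #{x ∈ Icc 1 (N : ℤ) | ∀ c ∈ l, x ∉ c +ᵥ A} = 0 :=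
      (Nat.cast_lt_one (α := ℝ)).1 (by linarith)
    simpa [filter_eq_empty_iff] using huncovered
  obtain ⟨χ, hχ, hmono⟩ := exists_coloring_of_apFree_cover (by omega : 0 < k)
    (Icc 1 (N : ℤ) : Set ℤ) (l.map fun c => ((c +ᵥ A : Finset ℤ) : Set ℤ))
    (by simpa [coe_vadd_finset] using fun c _ => hAP.vadd c)
    fun x hx => by
      obtain ⟨c, hc, hxc⟩ := hcover x hx
      exact ⟨_, List.mem_map_of_mem hc, hxc⟩
  refine ⟨χ, fun x hx => Int.lt_toNat.1 ?_, by simpa using hmono⟩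
  simpa only [List.length_map, hlen] using hχ x hx
end

section
/- Let k ≥ 2 and N ≥ 2 be integers. If there exists a corner-free set A ⊆ {1, …, N}^k with |A| = r ≥ 1, then there exists a coloring of {1, …, N}^k with at most ⌈(2N+1)^k · k · log₂ N / r⌉ colors such that no nontrivial k-dimensional corner is monochromatic, i.e. there is no x ∈ {1, …, N}^k and integer δ ≠ 0 such that x and all points x + δ·e_j for j ∈ {1, …, k} lie in {1, …, N}^k and receive the same color (where e_j is the j-th standard basis vector). -/
open Finset Pointwise

theorem CornerFree.vadd {n : ℕ} {Q : Set (Fin n → ℤ)} (hQ : CornerFree Q) (t : Fin n → ℤ) :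
    CornerFree (t +ᵥ Q) := by
  rintro ⟨x, δ, hδ, hx, hcorner⟩
  refine hQ ⟨-t + x, δ, hδ, Set.mem_vadd_set_iff_neg_vadd_mem.mp hx, fun j => ?_⟩
  have hj := Set.mem_vadd_set_iff_neg_vadd_mem.mp (hcorner j)
  rw [vadd_eq_add, ← Function.update_eq_self j (-t), ← Function.update_add] at hj
  rwa [Pi.add_apply, add_assoc]

section Translates

variable {G : Type*} [AddCommGroup G] [DecidableEq G] {A T U : Finset G}

theorem Finset.sum_card_vadd_inter (h : U - A ⊆ T) :
    ∑ t ∈ T, #((t +ᵥ A) ∩ U) = #U * #A := by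
  have hrow : ∀ t, (t +ᵥ A) ∩ U = U.bipartiteAbove (fun t u => u - t ∈ A) t := by
    intro t
    ext u
    simp only [mem_inter, mem_bipartiteAbove, ← neg_vadd_mem_iff, vadd_eq_add, sub_eq_neg_add,
      and_comm]
  have hcol : ∀ u ∈ U, T.bipartiteBelow (fun t u => u - t ∈ A) u = A.image (u - ·) := by
    intro u hu
    ext t
    simp only [mem_bipartiteBelow, mem_image]
    constructor
    · rintro ⟨-, ha⟩
      exact ⟨u - t, ha, sub_sub_cancel u t⟩
    · rintro ⟨a, ha, rfl⟩
      exact ⟨h (sub_mem_sub hu ha), by rwa [sub_sub_cancel]⟩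
  simp_rw [hrow, sum_card_bipartiteAbove_eq_sum_card_bipartiteBelow]
  rw [sum_congr rfl fun u hu => by rw [hcol u hu, card_image_of_injective _ sub_right_injective],
    sum_const, smul_eq_mul]

theorem Finset.exists_card_mul_card_le_card_mul_card_vadd_inter (hT : T.Nonempty)
    (h : U - A ⊆ T) : ∃ t ∈ T, #U * #A ≤ #T * #((t +ᵥ A) ∩ U) := by
  refine exists_le_of_sum_le hT ?_
  rw [sum_const, ← mul_sum, sum_card_vadd_inter h, smul_eq_mul]

theorem Finset.exists_card_sdiff_biUnion_vadd_mul_pow_le (hT : T.Nonempty) (h : U - A ⊆ T)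
    (m : ℕ) : ∃ S : Finset G, #S ≤ m ∧ #(U \ S.biUnion (· +ᵥ A)) * #T ^ m ≤ #U * (#T - #A) ^ m := by
  induction m with
  | zero => exact ⟨∅, by simp⟩
  | succ m ih =>
    obtain ⟨S, hSm, hS⟩ := ih
    set V := U \ S.biUnion (· +ᵥ A)
    have hV : V - A ⊆ T := (sub_subset_sub_right sdiff_subset).trans h
    obtain ⟨t, -, ht⟩ := exists_card_mul_card_le_card_mul_card_vadd_inter hT hV
    have hstep : #(V \ (t +ᵥ A)) * #T ≤ #V * (#T - #A) := by
      have hsplit := card_sdiff_add_card_inter V (t +ᵥ A)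
      rw [inter_comm] at hsplit
      have : #(V \ (t +ᵥ A)) * #T + #V * #A ≤ #V * #T := by nlinarith
      rw [Nat.mul_sub]
      omega
    refine ⟨insert t S, (card_insert_le t S).trans (by omega), ?_⟩
    rw [biUnion_insert, union_comm, sdiff_union_distrib, ← sdiff_sdiff_left']
    calc #(V \ (t +ᵥ A)) * #T ^ (m + 1) = #(V \ (t +ᵥ A)) * #T * #T ^ m := by ring
      _ ≤ #V * (#T - #A) * #T ^ m := by gcongr
      _ = #V * #T ^ m * (#T - #A) := by ring
      _ ≤ #U * (#T - #A) ^ m * (#T - #A) := by gcongr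
      _ = #U * (#T - #A) ^ (m + 1) := by ring

theorem Finset.exists_subset_biUnion_vadd (hT : T.Nonempty) (h : U - A ⊆ T) {m : ℕ}
    (hm : #U * (#T - #A) ^ m < #T ^ m) : ∃ S : Finset G, #S ≤ m ∧ U ⊆ S.biUnion (· +ᵥ A) := by
  obtain ⟨S, hSm, hS⟩ := exists_card_sdiff_biUnion_vadd_mul_pow_le hT h m
  refine ⟨S, hSm, sdiff_eq_empty_iff_subset.mp (card_eq_zero.mp ?_)⟩
  by_contra h0
  have := Nat.mul_le_mul_right (#T ^ m) (Nat.one_le_iff_ne_zero.mpr h0)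
  omega

end Translates

theorem Finset.exists_coloring_of_subset_biUnion {α ι : Type*} [DecidableEq α] {U : Finset α}
    {S : Finset ι} {B : ι → Finset α} (h : U ⊆ S.biUnion B) :
    ∃ χ : α → ℕ, (∀ x ∈ U, χ x < #S) ∧ ∀ x ∈ U, ∃ i, ∀ y ∈ U, χ y = χ x → y ∈ B i := by
  choose idx hidxS hidxB using fun x (hx : x ∈ U) => mem_biUnion.mp (h hx)
  let c : ∀ x ∈ U, Fin #S := fun x hx => S.equivFin ⟨idx x hx, hidxS x hx⟩
  refine ⟨fun x => if hx : x ∈ U then c x hx else 0, fun x hx => by simp [hx],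
    fun x hx => ⟨idx x hx, fun y hy hyx => ?_⟩⟩
  simp only [hx, hy, dif_pos, Fin.val_inj, c, S.equivFin.apply_eq_iff_eq, Subtype.mk.injEq] at hyx
  exact hyx ▸ hidxB y hy

theorem Real.mul_sub_pow_lt_pow {M T r : ℝ} {m : ℕ} (hM : 0 < M) (hT : 0 < T) (hrT : r ≤ T)
    (h : T * Real.log M < r * m) : M * (T - r) ^ m < T ^ m := by
  have hexp : T - r ≤ T * exp (-(r / T)) :=
    calc T - r = T * (-(r / T) + 1) := by field_simp; ring
      _ ≤ T * exp (-(r / T)) := mul_le_mul_of_nonneg_left (add_one_le_exp _) hT.le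
  have hlt : M * exp (-(r / T)) ^ m < 1 := by
    have hlog : Real.log M < r * m / T := (lt_div_iff₀ hT).mpr (by linarith)
    have hrm : r * m / T = m * (r / T) := by ring
    rw [← exp_log hM, ← exp_nat_mul, ← exp_add, exp_lt_one_iff]
    linarith
  calc M * (T - r) ^ m ≤ M * (T * exp (-(r / T))) ^ m := by gcongr
    _ = M * exp (-(r / T)) ^ m * T ^ m := by ring
    _ < T ^ m := (mul_lt_iff_lt_one_left (pow_pos hT m)).mpr hlt

section Grid

variable {ι : Type*} [Fintype ι] [DecidableEq ι]

theorem Fintype.piFinset_Icc_sub_piFinset_Icc_subset (N : ℤ) :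
    piFinset (fun _ : ι => Icc 1 N) - piFinset (fun _ => Icc 1 N) ⊆
      piFinset fun _ => Icc (1 - N) (N - 1) := by
  rw [← piFinset_sub]
  refine piFinset_subset _ _ fun _ x hx => ?_
  obtain ⟨a, ha, b, hb, rfl⟩ := mem_sub.mp hx
  rw [mem_Icc] at ha hb ⊢
  omega

theorem Fintype.card_piFinset_Icc_one (N : ℕ) :
    #(piFinset fun _ : ι => Icc (1 : ℤ) N) = N ^ Fintype.card ι := by
  simp

theorem Fintype.card_piFinset_Icc_one_sub_sub_one (N : ℕ) :
    #(piFinset fun _ : ι => Icc (1 - (N : ℤ)) (N - 1)) = (2 * N - 1) ^ Fintype.card ι := by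
  simp only [card_piFinset, Int.card_Icc, prod_const, card_univ]
  congr 1
  omega

end Grid

theorem Real.log_le_logb_two {x : ℝ} (hx : 1 ≤ x) : Real.log x ≤ Real.logb 2 x := by
  rw [← Real.log_div_log]
  exact le_div_self (Real.log_nonneg hx) (Real.log_pos one_lt_two)
    (Real.log_two_lt_d9.le.trans (by norm_num))

theorem exists_vadd_cover_piFinset_Icc {k N : ℕ} (hk : 1 ≤ k) (hN : 2 ≤ N)
    {A : Finset (Fin k → ℤ)} (hA : A ⊆ Fintype.piFinset fun _ => Icc (1 : ℤ) N)
    (hA₀ : A.Nonempty) :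
    ∃ S : Finset (Fin k → ℤ),
      #S ≤ ⌈(2 * (N : ℝ) + 1) ^ k * k * Real.logb 2 N / #A⌉₊ ∧
      Fintype.piFinset (fun _ => Icc (1 : ℤ) N) ⊆ S.biUnion (· +ᵥ A) := by
  set m := ⌈(2 * (N : ℝ) + 1) ^ k * k * Real.logb 2 N / #A⌉₊
  refine exists_subset_biUnion_vadd
    (Fintype.piFinset_nonempty.mpr fun _ => nonempty_Icc.mpr (by omega))
    ((sub_subset_sub_left hA).trans (Fintype.piFinset_Icc_sub_piFinset_Icc_subset N)) ?_
  rw [Fintype.card_piFinset_Icc_one, Fintype.card_piFinset_Icc_one_sub_sub_one, Fintype.card_fin]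
  have hAbox : #A ≤ (2 * N - 1) ^ k := by
    refine (card_le_card hA).trans ?_
    rw [Fintype.card_piFinset_Icc_one, Fintype.card_fin]
    exact Nat.pow_le_pow_left (by omega) k
  have hNR : (2 : ℝ) ≤ N := by exact_mod_cast hN
  have hlogN : 0 < Real.log N := Real.log_pos (by linarith)
  have hlog_lt : (((2 * N - 1 : ℕ) : ℝ) ^ k) * Real.log ((N : ℝ) ^ k) < #A * m :=
    calc (((2 * N - 1 : ℕ) : ℝ) ^ k) * Real.log ((N : ℝ) ^ k)
        = (2 * N - 1 : ℝ) ^ k * (k * Real.log N) := by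
          rw [Real.log_pow, Nat.cast_sub (by omega)]; push_cast; ring
      _ < (2 * N + 1 : ℝ) ^ k * (k * Real.log N) :=
          mul_lt_mul_of_pos_right (pow_lt_pow_left₀ (by linarith) (by linarith) (by omega))
            (mul_pos (by exact_mod_cast hk) hlogN)
      _ ≤ (2 * N + 1 : ℝ) ^ k * k * Real.logb 2 N := by
          rw [mul_assoc]; gcongr; exact Real.log_le_logb_two (by linarith)
      _ = #A * ((2 * (N : ℝ) + 1) ^ k * k * Real.logb 2 N / #A) := by
          field_simp [hA₀.card_pos.ne']
      _ ≤ #A * m := by gcongr; exact Nat.le_ceil _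
  have h := Real.mul_sub_pow_lt_pow (m := m) (by positivity)
    (pow_pos (by exact_mod_cast (by omega : 0 < 2 * N - 1)) k) (by exact_mod_cast hAbox) hlog_lt
  rw [← Nat.cast_pow (2 * N - 1) k, ← Nat.cast_sub hAbox] at h
  exact_mod_cast h

/-- if there is a corner-free `A ⊆ {1, …, N}^k` of size `r ≥ 1`, then
`{1, …, N}^k` can be colored with at most `⌈(2N+1)^k · k · log₂ N / r⌉` colors (colors
being the naturals below that bound) such that no nontrivial `k`-dimensional corner is
monochromatic. -/
theorem stmt11 (k N r : ℕ) (hk : 2 ≤ k) (hN : 2 ≤ N) (hr : 1 ≤ r)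
    (A : Finset (Fin k → ℤ))
    (hA : A ⊆ Fintype.piFinset (fun _ => Finset.Icc (1 : ℤ) (N : ℤ)))
    (hcard : A.card = r) (hCF : CornerFree (↑A : Set (Fin k → ℤ))) :
    ∃ χ : (Fin k → ℤ) → ℕ,
      (∀ x : Fin k → ℤ, (∀ j, x j ∈ Finset.Icc (1 : ℤ) (N : ℤ)) →
        (χ x : ℤ) < ⌈((2 * (N : ℝ) + 1) ^ k * k * Real.logb 2 N) / (r : ℝ)⌉) ∧
      ¬ ∃ (x : Fin k → ℤ) (δ : ℤ), δ ≠ 0 ∧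
        (∀ j, x j ∈ Finset.Icc (1 : ℤ) (N : ℤ)) ∧
        (∀ j j', Function.update x j (x j + δ) j' ∈ Finset.Icc (1 : ℤ) (N : ℤ)) ∧
        (∀ j, χ (Function.update x j (x j + δ)) = χ x) := by
  obtain ⟨S, hSm, hcover⟩ :=
    exists_vadd_cover_piFinset_Icc (by omega) hN hA (card_pos.mp (hcard ▸ hr))
  obtain ⟨χ, hχS, hχ⟩ := exists_coloring_of_subset_biUnion hcover
  refine ⟨χ, fun x hx => ?_, ?_⟩
  · have hB : 0 ≤ (2 * (N : ℝ) + 1) ^ k * k * Real.logb 2 N / r := by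
      have := Real.logb_nonneg one_lt_two (by exact_mod_cast (by omega : 1 ≤ N) : (1 : ℝ) ≤ N)
      positivity
    rw [← Int.natCast_ceil_eq_ceil hB, ← hcard]
    exact_mod_cast (hχS x (Fintype.mem_piFinset.mpr hx)).trans_le hSm
  · rintro ⟨x, δ, hδ, hx, hcorner, hmono⟩
    have hxU := Fintype.mem_piFinset.mpr hx
    obtain ⟨t, ht⟩ := hχ x hxU
    refine hCF.vadd t ⟨x, δ, hδ, ?_, fun j => ?_⟩ <;> rw [← coe_vadd_finset]
    exacts [ht x hxU rfl, ht _ (Fintype.mem_piFinset.mpr (hcorner j)) (hmono j)]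
end

section
/- Let k ≥ 1 be an integer and let x be a real number with 1 ≤ x ≤ k. Then k! · (F_k(x) − F_k(x−1)) = Σ_{j=0}^{⌊x⌋} (−1)^j · binom(k+1, j) · (x−j)^k. -/
/-! Shifting the second sum by one index and applying Pascal's rule
`binom(k+1, j+1) = binom(k, j) + binom(k, j+1)` termwise gives the identity; the exponent `k` of
`(x - j)^k` plays no role, and `⌊x⌋ = ⌊x - 1⌋ + 1` makes the two sums line up. -/

/-- The cumulative distribution function of the Irwin–Hall distribution:
`F k x = (1/k!) · Σ_{j=0}^{⌊x⌋} (-1)^j · binom(k,j) · (x-j)^k` for `x ≥ 0`, and `0` for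
`x < 0`. -/
noncomputable def irwinHallF (k : ℕ) (x : ℝ) : ℝ :=
  if x < 0 then 0
  else (1 / (k.factorial : ℝ)) *
    ∑ j ∈ Finset.range (⌊x⌋.toNat + 1), (-1 : ℝ) ^ j * (k.choose j : ℝ) * (x - j) ^ k

open Finset

theorem sum_alternating_choose_sub_sum_shift {R : Type*} [CommRing R] (k n : ℕ) (f : ℕ → R) :
    ∑ j ∈ range (n + 2), (-1 : R) ^ j * k.choose j * f j
      - ∑ j ∈ range (n + 1), (-1 : R) ^ j * k.choose j * f (j + 1) =
    ∑ j ∈ range (n + 2), (-1 : R) ^ j * (k + 1).choose j * f j := by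
  rw [sum_range_succ' _ (n + 1), sum_range_succ' (fun j => _ * ((k + 1).choose j : R) * _),
    add_sub_right_comm, ← sum_sub_distrib]
  congr 1
  · refine sum_congr rfl fun j _ => ?_
    rw [Nat.choose_succ_succ', Nat.cast_add]
    ring
  · simp

theorem factorial_mul_irwinHallF {k : ℕ} {x : ℝ} (hx : 0 ≤ x) :
    (k.factorial : ℝ) * irwinHallF k x =
      ∑ j ∈ range (⌊x⌋₊ + 1), (-1 : ℝ) ^ j * (k.choose j : ℝ) * (x - j) ^ k := by
  rw [irwinHallF, if_neg hx.not_gt, Int.floor_toNat, ← mul_assoc,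
    mul_one_div_cancel (by positivity), one_mul]

theorem stmt12_general (k : ℕ) (x : ℝ) (hx1 : 1 ≤ x) :
    (k.factorial : ℝ) * (irwinHallF k x - irwinHallF k (x - 1)) =
    ∑ j ∈ Finset.range (⌊x⌋.toNat + 1), (-1 : ℝ) ^ j * ((k + 1).choose j : ℝ) * (x - j) ^ k := by
  obtain ⟨y, hy, rfl⟩ : ∃ y : ℝ, 0 ≤ y ∧ x = y + 1 := ⟨x - 1, by linarith, by ring⟩
  rw [add_sub_cancel_right, mul_sub, factorial_mul_irwinHallF (by linarith),
    factorial_mul_irwinHallF hy, Int.floor_toNat, Nat.floor_add_one hy,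
    ← sum_alternating_choose_sub_sum_shift k ⌊y⌋₊ fun j : ℕ => (y + 1 - j) ^ k]
  simp only [Nat.cast_add, Nat.cast_one, add_sub_add_right_eq_sub]

/-- for `1 ≤ x ≤ k`,
`k! · (F_k(x) − F_k(x−1)) = Σ_{j=0}^{⌊x⌋} (−1)^j · binom(k+1, j) · (x−j)^k`. -/
theorem stmt12 (k : ℕ) (hk : 1 ≤ k) (x : ℝ) (hx1 : 1 ≤ x) (hxk : x ≤ k) :
    (k.factorial : ℝ) * (irwinHallF k x - irwinHallF k (x - 1)) =
    ∑ j ∈ Finset.range (⌊x⌋.toNat + 1), (-1 : ℝ) ^ j * ((k + 1).choose j : ℝ) * (x - j) ^ k :=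
  stmt12_general k x hx1
end

section
/- Let k ≥ 1 be an integer. Then the alternating sum of Eulerian numbers Σ_{ℓ=0}^{k−1} (−1)^ℓ · ⟨k, ℓ⟩ equals 0 if k is even, and equals (−1)^{(k−1)/2} · E_k if k is odd. -/
/-- The number of descents of a permutation `σ` of `{0, …, k-1}`: the number of indices
`z` with `z + 1 < k` and `σ z > σ (z+1)`. -/
noncomputable def descentCount {k : ℕ} (σ : Equiv.Perm (Fin k)) : ℕ :=
  Nat.card {z : ℕ // ∃ h : z + 1 < k, σ ⟨z + 1, h⟩ < σ ⟨z, Nat.lt_of_succ_lt h⟩}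

/-- The Eulerian number `⟨k, ℓ⟩`: the number of permutations of `{0, …, k-1}` with
exactly `ℓ` descents. -/
noncomputable def eulerianNum (k ℓ : ℕ) : ℕ :=
  Nat.card {σ : Equiv.Perm (Fin k) // descentCount σ = ℓ}

/-- The Euler zigzag number `E n`: the number of alternating permutations of
`{0, …, n-1}`, i.e. permutations `σ` with `σ 0 < σ 1 > σ 2 < σ 3 > ⋯`. -/
noncomputable def zigzagNum (n : ℕ) : ℕ :=
  Nat.card {σ : Equiv.Perm (Fin n) //
    ∀ z : ℕ, ∀ h : z + 1 < n,
      if z % 2 = 0 then σ ⟨z, Nat.lt_of_succ_lt h⟩ < σ ⟨z + 1, h⟩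
      else σ ⟨z + 1, h⟩ < σ ⟨z, Nat.lt_of_succ_lt h⟩}

/-!
Pad the word of `σ ∈ S_n` with a letter `0` at both ends. Its number of descents is then one more
than that of `σ`, and each letter is a peak, a valley, a double ascent or a double descent. Take
the smallest letter `x` that is a double ascent or a double descent and let it hop over the block
of larger letters beside it: a double ascent moves right to just before the next smaller letter,
a double descent left to just after the previous smaller letter. This turns `x` into a letter of
the other kind, leaves the kind of every other letter unchanged, and changes the number of descents
by one, so it is a sign-reversing involution for `(-1) ^ des`. The survivors are the permutations
all of whose letters are peaks or valleys, i.e. whose padded word alternates from an ascent at the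
start to a descent at the end. There are none for even `n`; for odd `n` they are the down-up
permutations, which complementation maps onto the `E_n` up-down ones, each with `(n + 1) / 2`
padded descents.
-/

lemma sum_mul_card_fiber {α R : Type*} [Fintype α] [CommSemiring R] (f : α → ℕ) {k : ℕ}
    (hf : ∀ a, f a < k) (g : ℕ → R) :
    ∑ ℓ ∈ Finset.range k, g ℓ * Nat.card {a // f a = ℓ} = ∑ a, g (f a) := by
  classical
  rw [← Finset.sum_fiberwise_of_maps_to' (g := f) (t := Finset.range k)
    fun a _ => Finset.mem_range.mpr (hf a)]
  refine Finset.sum_congr rfl fun ℓ _ => ?_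
  rw [Finset.sum_const, nsmul_eq_mul, mul_comm, Nat.card_eq_fintype_card, Fintype.card_subtype]

namespace ValleyHopping

open Finset Equiv

variable {n : ℕ}

/-- The one-line word `0, σ 0 + 1, …, σ (n-1) + 1, 0, 0, …`: position `z ∈ [1, n]` carries the
value `σ (z - 1) + 1 ∈ [1, n]`, and every other position carries the padding letter `0`. -/
def word (σ : Perm (Fin n)) (z : ℕ) : ℕ :=
  if h : 1 ≤ z ∧ z ≤ n then σ ⟨z - 1, by omega⟩ + 1 else 0

section Word

variable (σ : Perm (Fin n)) {z w : ℕ}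

lemma word_of_not_mem (h : ¬(1 ≤ z ∧ z ≤ n)) : word σ z = 0 := by
  simp [word, h]

@[simp] lemma word_zero : word σ 0 = 0 := word_of_not_mem σ (by omega)

lemma word_of_mem (h1 : 1 ≤ z) (h2 : z ≤ n) : word σ z = σ ⟨z - 1, by omega⟩ + 1 := by
  simp [word, h1, h2]

lemma word_mem_Icc (h1 : 1 ≤ z) (h2 : z ≤ n) : 1 ≤ word σ z ∧ word σ z ≤ n := by
  have := (σ ⟨z - 1, by omega⟩).isLt
  rw [word_of_mem σ h1 h2]
  omega

lemma one_le_word_iff : 1 ≤ word σ z ↔ 1 ≤ z ∧ z ≤ n :=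
  ⟨fun h => by_contra fun hz => by rw [word_of_not_mem σ hz] at h; omega,
    fun h => (word_mem_Icc σ h.1 h.2).1⟩

lemma word_inj (hz1 : 1 ≤ z) (hz2 : z ≤ n) (hw1 : 1 ≤ w) (hw2 : w ≤ n) :
    word σ z = word σ w ↔ z = w := by
  refine ⟨fun h => ?_, fun h => h ▸ rfl⟩
  rw [word_of_mem σ hz1 hz2, word_of_mem σ hw1 hw2, add_left_inj, Fin.val_inj,
    σ.injective.eq_iff, Fin.mk.injEq] at h
  omega

lemma word_word_symm {y : ℕ} (h1 : 1 ≤ y) (h2 : y ≤ n) : word σ (word σ.symm y) = y := by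
  have := word_mem_Icc σ.symm h1 h2
  rw [word_of_mem σ this.1 this.2]
  simp only [word_of_mem σ.symm h1 h2, Nat.add_sub_cancel, Fin.eta, Equiv.apply_symm_apply]
  omega

lemma word_apply_trans (e : Perm (Fin n)) (h1 : 1 ≤ z) (h2 : z ≤ n) :
    word (e.trans σ) z = word σ (e ⟨z - 1, by omega⟩ + 1) := by
  have := (e ⟨z - 1, by omega⟩).isLt
  rw [word_of_mem _ h1 h2, word_of_mem σ (by omega) (by omega)]
  simp

end Word

lemma lt_word_of_le_of_ne (σ : Perm (Fin n)) {p s : ℕ} (hp1 : 1 ≤ p) (hpn : p ≤ n)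
    (h : word σ p ≤ word σ s) (hsp : s ≠ p) : word σ p < word σ s := by
  have hs : 1 ≤ s ∧ s ≤ n := (one_le_word_iff σ).mp ((word_mem_Icc σ hp1 hpn).1.trans h)
  exact h.lt_of_ne fun heq => hsp ((word_inj σ hs.1 hs.2 hp1 hpn).mp heq.symm)

def pos (σ : Perm (Fin n)) (y : ℕ) : ℕ := word σ.symm y

section Pos

variable (σ : Perm (Fin n)) {y z : ℕ}

lemma pos_mem_Icc (h1 : 1 ≤ y) (h2 : y ≤ n) : 1 ≤ pos σ y ∧ pos σ y ≤ n :=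
  word_mem_Icc σ.symm h1 h2

lemma word_pos (h1 : 1 ≤ y) (h2 : y ≤ n) : word σ (pos σ y) = y :=
  word_word_symm σ h1 h2

lemma pos_word (h1 : 1 ≤ z) (h2 : z ≤ n) : pos σ (word σ z) = z := by
  have := word_word_symm σ.symm h1 h2
  rwa [Equiv.symm_symm] at this

lemma exists_word_eq (h1 : 1 ≤ y) (h2 : y ≤ n) : ∃ z, 1 ≤ z ∧ z ≤ n ∧ word σ z = y :=
  ⟨pos σ y, (pos_mem_Icc σ h1 h2).1, (pos_mem_Icc σ h1 h2).2, word_pos σ h1 h2⟩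

end Pos

lemma val_cycleIcc {i j : Fin n} (k : Fin n) :
    (Fin.cycleIcc i j k : ℕ) =
      if i ≤ k ∧ k ≤ j then (if k = j then (i : ℕ) else k + 1) else k := by
  have := k.neZero
  rcases lt_or_ge k i with hki | hik
  · rw [Fin.cycleIcc_of_lt hki, if_neg (by omega)]
  rcases lt_or_ge j k with hjk | hkj
  · rw [Fin.cycleIcc_of_gt hjk, if_neg (by omega)]
  rw [Fin.cycleIcc_of_le_of_le hik hkj, if_pos (And.intro hik hkj)]
  split_ifs with h
  · rfl
  · have := j.isLt
    exact Fin.val_add_one_of_lt' (by simp only [Fin.le_def, Fin.ext_iff] at *; omega)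

lemma val_cycleIcc_symm {i j : Fin n} (k : Fin n) :
    ((Fin.cycleIcc i j).symm k : ℕ) =
      if i ≤ k ∧ k ≤ j then (if k = i then (j : ℕ) else k - 1) else k := by
  set l := (Fin.cycleIcc i j).symm k
  have hl : (Fin.cycleIcc i j l : ℕ) = k := by rw [Equiv.apply_symm_apply]
  rw [val_cycleIcc] at hl
  simp only [Fin.le_def, Fin.ext_iff] at hl ⊢
  split_ifs at hl ⊢ <;> omega

/-- For `1 ≤ p < t ≤ n + 1`, `hop σ p t` moves the letter at position `p` of `word σ` to position
`t - 1`, shifting the letters at positions `p + 1, …, t - 1` one step to the left. -/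
def hop (σ : Perm (Fin n)) (p t : ℕ) : Perm (Fin n) :=
  if h : p - 1 < n ∧ t - 2 < n then (Fin.cycleIcc ⟨p - 1, h.1⟩ ⟨t - 2, h.2⟩).trans σ else σ

def unhop (σ : Perm (Fin n)) (p t : ℕ) : Perm (Fin n) :=
  if h : p - 1 < n ∧ t - 2 < n then (Fin.cycleIcc ⟨p - 1, h.1⟩ ⟨t - 2, h.2⟩).symm.trans σ else σ

section Hop

variable (σ : Perm (Fin n)) {p t z : ℕ}

@[simp] lemma unhop_hop : unhop (hop σ p t) p t = σ := by
  unfold hop unhop; split_ifs <;> ext <;> simp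

@[simp] lemma hop_unhop : hop (unhop σ p t) p t = σ := by
  unfold hop unhop; split_ifs <;> ext <;> simp

lemma word_hop (hp : 1 ≤ p) (hpt : p + 1 ≤ t) (ht : t ≤ n + 1) :
    word (hop σ p t) z =
      word σ (if p ≤ z ∧ z ≤ t - 1 then (if z = t - 1 then p else z + 1) else z) := by
  by_cases hz : 1 ≤ z ∧ z ≤ n
  · rw [hop, dif_pos (by omega), word_apply_trans σ _ hz.1 hz.2, val_cycleIcc]
    simp only [Fin.le_def, Fin.ext_iff]
    congr 1
    split_ifs <;> omega
  · rw [word_of_not_mem _ hz, if_neg (by omega), word_of_not_mem σ hz]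

lemma word_unhop (hp : 1 ≤ p) (hpt : p + 1 ≤ t) (ht : t ≤ n + 1) :
    word (unhop σ p t) z =
      word σ (if p ≤ z ∧ z ≤ t - 1 then (if z = p then t - 1 else z - 1) else z) := by
  by_cases hz : 1 ≤ z ∧ z ≤ n
  · rw [unhop, dif_pos (by omega), word_apply_trans σ _ hz.1 hz.2, val_cycleIcc_symm]
    simp only [Fin.le_def, Fin.ext_iff]
    congr 1
    split_ifs <;> omega
  · rw [word_of_not_mem _ hz, if_neg (by omega), word_of_not_mem σ hz]

end Hop

def IsDescent (σ : Perm (Fin n)) (s : ℕ) : Prop := word σ (s + 1) < word σ s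

instance (σ : Perm (Fin n)) : DecidablePred (IsDescent σ) := fun _ => Nat.decLt _ _

/-- The number of descents of the padded word: for `n ≥ 1` one more than the number of descents
of `σ`, because position `n` always descends to the padding letter. -/
def descentNum (σ : Perm (Fin n)) : ℕ := #{s ∈ range (n + 1) | IsDescent σ s}

section Descent

variable (σ : Perm (Fin n)) {s : ℕ}

lemma not_isDescent_zero : ¬IsDescent σ 0 := by simp [IsDescent]

lemma isDescent_last (hn : 1 ≤ n) : IsDescent σ n := by
  have := word_mem_Icc σ hn le_rfl
  rw [IsDescent, word_of_not_mem σ (by omega)]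
  omega

lemma word_lt_word_succ_of_not_isDescent (hn : 1 ≤ n) (hs : s ≤ n) (h : ¬IsDescent σ s) :
    word σ s < word σ (s + 1) := by
  rw [IsDescent, not_lt] at h
  refine lt_of_le_of_ne h fun heq => ?_
  rcases Nat.eq_zero_or_pos s with rfl | hs0
  · have := word_mem_Icc σ le_rfl hn
    simp only [word_zero, zero_add] at heq
    omega
  rcases hs.lt_or_eq with hsn | rfl
  · exact absurd ((word_inj σ hs0 hs (by omega) hsn).mp heq) (by omega)
  · exact absurd h (not_le.mpr (isDescent_last σ hn))

lemma isDescent_succ_iff {z : ℕ} (h : z + 1 < n) :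
    IsDescent σ (z + 1) ↔ σ ⟨z + 1, h⟩ < σ ⟨z, by omega⟩ := by
  rw [IsDescent, word_of_mem σ (by omega) (by omega), word_of_mem σ (by omega) (by omega),
    Fin.lt_def]
  simp

end Descent

/-- The letters of the padded word that are neither peaks nor valleys, i.e. the double ascents
and double descents: the letter at position `z` is a peak or a valley exactly when one of the
positions `z - 1`, `z` is a descent and the other is not. -/
def nonTurning (σ : Perm (Fin n)) : Finset ℕ :=
  {y ∈ Icc 1 n | IsDescent σ (pos σ y - 1) ↔ IsDescent σ (pos σ y)}

lemma word_mem_nonTurning_iff (σ : Perm (Fin n)) {z : ℕ} (h1 : 1 ≤ z) (h2 : z ≤ n) :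
    word σ z ∈ nonTurning σ ↔ (IsDescent σ (z - 1) ↔ IsDescent σ z) := by
  simp [nonTurning, pos_word σ h1 h2, word_mem_Icc σ h1 h2]

lemma exists_word_eq_of_mem_nonTurning {σ : Perm (Fin n)} {y : ℕ} (hy : y ∈ nonTurning σ) :
    ∃ z, 1 ≤ z ∧ z ≤ n ∧ word σ z = y := by
  simp only [nonTurning, mem_filter, mem_Icc] at hy
  exact exists_word_eq σ hy.1.1 hy.1.2

noncomputable def nextSmaller (σ : Perm (Fin n)) (p : ℕ) : ℕ :=
  sInf {s | p < s ∧ word σ s < word σ p}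

def prevSmaller (σ : Perm (Fin n)) (p : ℕ) : ℕ :=
  Nat.findGreatest (fun s => word σ s < word σ p) (p - 1)

/-- A double ascent at position `p` hops right to just before the next smaller letter; a double
descent hops left to just after the previous smaller letter. These two moves undo each other. -/
noncomputable def hopAt (σ : Perm (Fin n)) (p : ℕ) : Perm (Fin n) :=
  if IsDescent σ (p - 1) then unhop σ (prevSmaller σ p + 1) (p + 1) else hop σ p (nextSmaller σ p)

noncomputable def hopMin (σ : Perm (Fin n)) : Perm (Fin n) :=
  if h : (nonTurning σ).Nonempty then hopAt σ (pos σ ((nonTurning σ).min' h)) else σ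

lemma hopMin_eq_hopAt {σ : Perm (Fin n)} {p : ℕ} (hp1 : 1 ≤ p) (hpn : p ≤ n)
    (hmem : word σ p ∈ nonTurning σ) (hmin : ∀ y ∈ nonTurning σ, word σ p ≤ y) :
    hopMin σ = hopAt σ p := by
  have h : (nonTurning σ).Nonempty := ⟨_, hmem⟩
  rw [hopMin, dif_pos h, le_antisymm (min'_le _ _ hmem) (le_min' _ _ _ hmin), pos_word σ hp1 hpn]

/-- The letter at position `p` of `word σ` is a double ascent, and `t` is the first position to
its right carrying a smaller letter. -/
structure HopSite (σ : Perm (Fin n)) (p t : ℕ) : Prop where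
  one_le : 1 ≤ p
  add_two_le : p + 2 ≤ t
  le_add_one : t ≤ n + 1
  word_pred_lt : word σ (p - 1) < word σ p
  word_lt : word σ t < word σ p
  lt_word_of_lt_of_lt : ∀ s, p < s → s < t → word σ p < word σ s

namespace HopSite

variable {σ : Perm (Fin n)} {p t s : ℕ} (hs : HopSite σ p t)
include hs

lemma word_hop_of_not_mem {z : ℕ} (hz : z < p ∨ t ≤ z) : word (hop σ p t) z = word σ z := by
  have := hs.add_two_le
  rw [word_hop σ hs.one_le (by omega) hs.le_add_one, if_neg (by omega)]

lemma word_hop_of_mem {z : ℕ} (h1 : p ≤ z) (h2 : z + 2 ≤ t) :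
    word (hop σ p t) z = word σ (z + 1) := by
  have := hs.one_le
  rw [word_hop σ hs.one_le (by omega) hs.le_add_one, if_pos (by omega), if_neg (by omega)]

lemma word_hop_landing : word (hop σ p t) (t - 1) = word σ p := by
  have := hs.add_two_le
  rw [word_hop σ hs.one_le (by omega) hs.le_add_one, if_pos (by omega), if_pos rfl]

lemma not_isDescent_pred : ¬IsDescent σ (p - 1) := by
  have := hs.one_le
  rw [IsDescent, Nat.sub_add_cancel this]
  exact not_lt.mpr hs.word_pred_lt.le

lemma not_isDescent : ¬IsDescent σ p :=
  not_lt.mpr (hs.lt_word_of_lt_of_lt (p + 1) (by omega) (by have := hs.add_two_le; omega)).le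

lemma isDescent_landing : IsDescent σ (t - 1) := by
  have := hs.add_two_le
  rw [IsDescent, Nat.sub_add_cancel (by omega)]
  exact hs.word_lt.trans (hs.lt_word_of_lt_of_lt _ (by omega) (by omega))

lemma isDescent_hop_landing : IsDescent (hop σ p t) (t - 1) := by
  have := hs.add_two_le
  rw [IsDescent, Nat.sub_add_cancel (by omega), hs.word_hop_landing,
    hs.word_hop_of_not_mem (Or.inr le_rfl)]
  exact hs.word_lt

lemma isDescent_hop_iff_of_not_mem (h : s + 1 < p ∨ t - 1 ≤ s) :
    IsDescent (hop σ p t) s ↔ IsDescent σ s := by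
  rcases h.imp_right Nat.eq_or_lt_of_le with h | rfl | h
  · rw [IsDescent, IsDescent, hs.word_hop_of_not_mem (by omega),
      hs.word_hop_of_not_mem (by omega)]
  · exact iff_of_true hs.isDescent_hop_landing hs.isDescent_landing
  · rw [IsDescent, IsDescent, hs.word_hop_of_not_mem (by omega),
      hs.word_hop_of_not_mem (by omega)]

lemma isDescent_hop_iff_of_mem (h1 : p ≤ s + 1) (h2 : s + 2 ≤ t) :
    IsDescent (hop σ p t) s ↔ IsDescent σ (s + 1) := by
  have hpt := hs.add_two_le
  rcases h1.eq_or_lt with h1 | h1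
  · obtain rfl : s = p - 1 := by omega
    rw [Nat.sub_add_cancel hs.one_le]
    refine iff_of_false ?_ hs.not_isDescent
    rw [IsDescent, Nat.sub_add_cancel hs.one_le, hs.word_hop_of_mem le_rfl (by omega),
      hs.word_hop_of_not_mem (by omega), not_lt]
    exact (hs.word_pred_lt.trans (hs.lt_word_of_lt_of_lt (p + 1) (by omega) (by omega))).le
  rcases h2.eq_or_lt with h2 | h2
  · obtain rfl : s = t - 2 := by omega
    refine iff_of_true ?_ (by rw [show t - 2 + 1 = t - 1 by omega]; exact hs.isDescent_landing)
    rw [IsDescent, show t - 2 + 1 = t - 1 by omega, hs.word_hop_landing,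
      hs.word_hop_of_mem (by omega) (by omega), show t - 2 + 1 = t - 1 by omega]
    exact hs.lt_word_of_lt_of_lt _ (by omega) (by omega)
  · rw [IsDescent, IsDescent, hs.word_hop_of_mem (by omega) (by omega),
      hs.word_hop_of_mem (by omega) (by omega)]

lemma descentNum_hop : descentNum (hop σ p t) = descentNum σ + 1 := by
  have hp := hs.one_le
  have hpt := hs.add_two_le
  have ht := hs.le_add_one
  set f : Perm (Fin n) → ℕ → ℕ := fun ρ s => if IsDescent ρ s then 1 else 0
  have hsplit : ∀ ρ, descentNum ρ = (∑ s ∈ Ico 0 (p - 1), f ρ s) +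
      (∑ s ∈ Ico (p - 1) (t - 1), f ρ s) + ∑ s ∈ Ico (t - 1) (n + 1), f ρ s := fun ρ => by
    rw [descentNum, card_filter, range_eq_Ico, sum_Ico_consecutive _ (by omega) (by omega),
      sum_Ico_consecutive _ (by omega) (by omega)]
  have hleft : ∑ s ∈ Ico 0 (p - 1), f (hop σ p t) s = ∑ s ∈ Ico 0 (p - 1), f σ s :=
    sum_congr rfl fun s hs' => by
      rw [mem_Ico] at hs'
      simp only [f, hs.isDescent_hop_iff_of_not_mem (s := s) (by omega)]
  have hright : ∑ s ∈ Ico (t - 1) (n + 1), f (hop σ p t) s = ∑ s ∈ Ico (t - 1) (n + 1), f σ s :=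
    sum_congr rfl fun s hs' => by
      rw [mem_Ico] at hs'
      simp only [f, hs.isDescent_hop_iff_of_not_mem (s := s) (by omega)]
  have hmid_hop : ∑ s ∈ Ico (p - 1) (t - 1), f (hop σ p t) s =
      ∑ s ∈ Ico p (t - 1), f σ s + 1 := by
    calc ∑ s ∈ Ico (p - 1) (t - 1), f (hop σ p t) s
        = ∑ s ∈ Ico (p - 1) (t - 1), f σ (s + 1) := sum_congr rfl fun s hs' => by
          rw [mem_Ico] at hs'
          simp only [f, hs.isDescent_hop_iff_of_mem (s := s) (by omega) (by omega)]
      _ = ∑ s ∈ Ico p (t - 1 + 1), f σ s := by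
          rw [sum_Ico_add', Nat.sub_add_cancel hp]
      _ = ∑ s ∈ Ico p (t - 1), f σ s + 1 := by
          rw [sum_Ico_succ_top (by omega)]
          simp only [f, if_pos hs.isDescent_landing]
  have hmid : ∑ s ∈ Ico (p - 1) (t - 1), f σ s = ∑ s ∈ Ico p (t - 1), f σ s := by
    rw [sum_eq_sum_Ico_succ_bot (by omega), Nat.sub_add_cancel hp]
    simp only [f, if_neg hs.not_isDescent_pred, zero_add]
  rw [hsplit, hsplit, hleft, hright, hmid_hop, hmid]
  ring

lemma word_mem_nonTurning : word σ p ∈ nonTurning σ := by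
  have := hs.add_two_le
  have := hs.le_add_one
  rw [word_mem_nonTurning_iff σ hs.one_le (by omega)]
  exact iff_of_false hs.not_isDescent_pred hs.not_isDescent

lemma word_mem_nonTurning_hop : word σ p ∈ nonTurning (hop σ p t) := by
  have := hs.add_two_le
  have ht := hs.le_add_one
  rw [← hs.word_hop_landing, word_mem_nonTurning_iff _ (by omega) (by omega)]
  refine iff_of_true ?_ hs.isDescent_hop_landing
  rw [hs.isDescent_hop_iff_of_mem (by omega) (by omega), show t - 1 - 1 + 1 = t - 1 by omega]
  exact hs.isDescent_landing

/-- Hopping does not change the type of any letter other than the hopped one, which turns from a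
double ascent into a double descent. -/
lemma nonTurning_hop : nonTurning (hop σ p t) = nonTurning σ := by
  have hp := hs.one_le
  have hpt := hs.add_two_le
  have ht := hs.le_add_one
  ext y
  by_cases hy : 1 ≤ y ∧ y ≤ n
  swap
  · simp [nonTurning, hy]
  obtain ⟨z, hz1, hzn, rfl⟩ := exists_word_eq σ hy.1 hy.2
  rw [word_mem_nonTurning_iff σ hz1 hzn]
  rcases lt_trichotomy z p with hzp | rfl | hpz
  · rw [← hs.word_hop_of_not_mem (Or.inl hzp), word_mem_nonTurning_iff _ hz1 hzn,
      hs.isDescent_hop_iff_of_not_mem (s := z - 1) (by omega)]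
    rcases (show z + 1 < p ∨ z = p - 1 by omega) with h | rfl
    · rw [hs.isDescent_hop_iff_of_not_mem (Or.inl h)]
    · rw [hs.isDescent_hop_iff_of_mem (by omega) (by omega), Nat.sub_add_cancel hp,
        iff_false_intro hs.not_isDescent, iff_false_intro hs.not_isDescent_pred]
  · exact iff_of_true hs.word_mem_nonTurning_hop
      (iff_of_false hs.not_isDescent_pred hs.not_isDescent)
  rcases le_or_gt t z with htz | hzt
  · rw [← hs.word_hop_of_not_mem (Or.inr htz), word_mem_nonTurning_iff _ hz1 hzn,
      hs.isDescent_hop_iff_of_not_mem (s := z - 1) (Or.inr (by omega)),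
      hs.isDescent_hop_iff_of_not_mem (s := z) (Or.inr (by omega))]
  · have hshift : word σ z = word (hop σ p t) (z - 1) := by
      rw [hs.word_hop_of_mem (by omega) (by omega), Nat.sub_add_cancel hz1]
    rw [hshift, word_mem_nonTurning_iff _ (by omega) (by omega),
      hs.isDescent_hop_iff_of_mem (s := z - 1 - 1) (by omega) (by omega),
      hs.isDescent_hop_iff_of_mem (s := z - 1) (by omega) (by omega),
      Nat.sub_add_cancel (by omega : 1 ≤ z - 1), Nat.sub_add_cancel hz1]

lemma nextSmaller_eq : nextSmaller σ p = t := by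
  have hmem : t ∈ {s | p < s ∧ word σ s < word σ p} :=
    ⟨by have := hs.add_two_le; omega, hs.word_lt⟩
  refine (Nat.sInf_le hmem).antisymm (not_lt.mp fun h => ?_)
  obtain ⟨hps, hs'⟩ := Nat.sInf_mem ⟨t, hmem⟩
  exact lt_asymm hs' (hs.lt_word_of_lt_of_lt _ hps h)

lemma prevSmaller_hop : prevSmaller (hop σ p t) (t - 1) = p - 1 := by
  have hp := hs.one_le
  have hpt := hs.add_two_le
  rw [prevSmaller, Nat.findGreatest_eq_iff, hs.word_hop_landing]
  refine ⟨by omega, fun _ => ?_, fun s hps hst => ?_⟩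
  · rw [hs.word_hop_of_not_mem (by omega)]
    exact hs.word_pred_lt
  · rw [hs.word_hop_of_mem (by omega) (by omega), not_lt]
    exact (hs.lt_word_of_lt_of_lt _ (by omega) (by omega)).le

lemma hopAt_eq : hopAt σ p = hop σ p t := by
  rw [hopAt, if_neg hs.not_isDescent_pred, hs.nextSmaller_eq]

lemma hopAt_hop : hopAt (hop σ p t) (t - 1) = σ := by
  have hp := hs.one_le
  have hpt := hs.add_two_le
  have hdesc : IsDescent (hop σ p t) (t - 1 - 1) := by
    rw [hs.isDescent_hop_iff_of_mem (by omega) (by omega), show t - 1 - 1 + 1 = t - 1 by omega]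
    exact hs.isDescent_landing
  rw [hopAt, if_pos hdesc, hs.prevSmaller_hop, Nat.sub_add_cancel hp,
    Nat.sub_add_cancel (by omega), unhop_hop]

lemma hopMin_eq (hmin : ∀ y ∈ nonTurning σ, word σ p ≤ y) : hopMin σ = hop σ p t := by
  have := hs.add_two_le
  have := hs.le_add_one
  rw [hopMin_eq_hopAt hs.one_le (by omega) hs.word_mem_nonTurning hmin, hs.hopAt_eq]

lemma hopMin_hop (hmin : ∀ y ∈ nonTurning σ, word σ p ≤ y) : hopMin (hop σ p t) = σ := by
  have := hs.add_two_le
  have := hs.le_add_one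
  have hx : word σ p = word (hop σ p t) (t - 1) := hs.word_hop_landing.symm
  rw [hopMin_eq_hopAt (p := t - 1) (by omega) (by omega)
    (by rw [← hx]; exact hs.word_mem_nonTurning_hop) (by rwa [← hx, hs.nonTurning_hop]),
    hs.hopAt_hop]

end HopSite

lemma hopSite_nextSmaller {σ : Perm (Fin n)} {p : ℕ} (hp1 : 1 ≤ p) (hpn : p ≤ n)
    (hpred : ¬IsDescent σ (p - 1)) (hp : ¬IsDescent σ p) : HopSite σ p (nextSmaller σ p) := by
  have hx := word_mem_Icc σ hp1 hpn
  have hlast : n + 1 ∈ {s | p < s ∧ word σ s < word σ p} :=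
    ⟨by omega, by rw [word_of_not_mem σ (by omega)]; omega⟩
  obtain ⟨hpT, hT⟩ : p < nextSmaller σ p ∧ word σ (nextSmaller σ p) < word σ p :=
    Nat.sInf_mem ⟨_, hlast⟩
  have hbetween : ∀ s, p < s → s < nextSmaller σ p → word σ p < word σ s := fun s hps hsT =>
    lt_word_of_le_of_ne σ hp1 hpn (not_lt.mp fun h => Nat.notMem_of_lt_sInf hsT ⟨hps, h⟩)
      (by omega)
  refine ⟨hp1, ?_, Nat.sInf_le hlast, ?_, hT, hbetween⟩
  · by_contra! h
    rw [show nextSmaller σ p = p + 1 by omega] at hT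
    exact hp hT
  · have := word_lt_word_succ_of_not_isDescent σ (by omega) (by omega) hpred
    rwa [Nat.sub_add_cancel hp1] at this

lemma hopSite_unhop_prevSmaller {σ : Perm (Fin n)} {p : ℕ} (hp1 : 1 ≤ p) (hpn : p ≤ n)
    (hpred : IsDescent σ (p - 1)) (hp : IsDescent σ p) :
    HopSite (unhop σ (prevSmaller σ p + 1) (p + 1)) (prevSmaller σ p + 1) (p + 1) := by
  set a := prevSmaller σ p
  have hx := word_mem_Icc σ hp1 hpn
  have hzero : word σ 0 < word σ p := by rw [word_zero]; omega
  have ha : word σ a < word σ p :=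
    Nat.findGreatest_spec (P := fun s => word σ s < word σ p) (Nat.zero_le _) hzero
  have hap : a ≤ p - 1 := Nat.findGreatest_le _
  have hbetween : ∀ s, a < s → s < p → word σ p < word σ s := fun s has hsp =>
    lt_word_of_le_of_ne σ hp1 hpn
      (not_lt.mp (Nat.findGreatest_is_greatest (P := fun s => word σ s < word σ p) has
        (by omega))) (by omega)
  have hap' : a + 2 ≤ p := by
    by_contra! h
    rw [IsDescent, Nat.sub_add_cancel hp1, ← show a = p - 1 by omega] at hpred
    exact lt_asymm ha hpred
  have hword : ∀ z, word (unhop σ (a + 1) (p + 1)) z =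
      word σ (if a + 1 ≤ z ∧ z ≤ p then (if z = a + 1 then p else z - 1) else z) := fun z => by
    rw [word_unhop σ (by omega) (by omega) (by omega), Nat.add_sub_cancel]
  have hnew : word (unhop σ (a + 1) (p + 1)) (a + 1) = word σ p := by
    rw [hword, if_pos (by omega), if_pos rfl]
  refine ⟨by omega, by omega, by omega, ?_, ?_, fun s has hsp => ?_⟩
  · rw [hnew, Nat.add_sub_cancel, hword, if_neg (by omega)]
    exact ha
  · rw [hnew, hword, if_neg (by omega)]
    exact hp
  · rw [hnew, hword, if_pos (by omega), if_neg (by omega)]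
    exact hbetween _ (by omega) (by omega)

lemma exists_hopSite {σ : Perm (Fin n)} (h : (nonTurning σ).Nonempty) :
    ∃ ρ p t, HopSite ρ p t ∧ (∀ y ∈ nonTurning ρ, word ρ p ≤ y) ∧ (ρ = σ ∨ hop ρ p t = σ) := by
  obtain ⟨z, hz1, hzn, hz⟩ := exists_word_eq_of_mem_nonTurning (min'_mem _ h)
  have hmin : ∀ y ∈ nonTurning σ, word σ z ≤ y := fun y hy => hz ▸ min'_le _ _ hy
  have htype := (word_mem_nonTurning_iff σ hz1 hzn).mp (hz ▸ min'_mem _ h)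
  by_cases hd : IsDescent σ (z - 1)
  · have hs := hopSite_unhop_prevSmaller hz1 hzn hd (htype.mp hd)
    have hback := hop_unhop σ (p := prevSmaller σ z + 1) (t := z + 1)
    have hx := hs.word_hop_landing
    rw [hback, Nat.add_sub_cancel] at hx
    refine ⟨_, _, _, hs, ?_, Or.inr hback⟩
    rwa [← hx, ← hs.nonTurning_hop, hback]
  · exact ⟨σ, z, _, hopSite_nextSmaller hz1 hzn hd (mt htype.mpr hd), hmin, Or.inl rfl⟩

section Involution

variable {σ : Perm (Fin n)} (h : (nonTurning σ).Nonempty)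
include h

lemma hopMin_hopMin : hopMin (hopMin σ) = σ := by
  obtain ⟨ρ, p, t, hs, hmin, rfl | rfl⟩ := exists_hopSite h
  · rw [hs.hopMin_eq hmin, hs.hopMin_hop hmin]
  · rw [hs.hopMin_hop hmin, hs.hopMin_eq hmin]

lemma nonTurning_hopMin : nonTurning (hopMin σ) = nonTurning σ := by
  obtain ⟨ρ, p, t, hs, hmin, rfl | rfl⟩ := exists_hopSite h
  · rw [hs.hopMin_eq hmin, hs.nonTurning_hop]
  · rw [hs.hopMin_hop hmin, hs.nonTurning_hop]

lemma neg_one_pow_descentNum_hopMin :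
    (-1 : ℤ) ^ descentNum (hopMin σ) = -(-1) ^ descentNum σ := by
  obtain ⟨ρ, p, t, hs, hmin, rfl | rfl⟩ := exists_hopSite h
  · rw [hs.hopMin_eq hmin, hs.descentNum_hop, pow_succ, mul_neg_one]
  · rw [hs.hopMin_hop hmin, hs.descentNum_hop, pow_succ, mul_neg_one, neg_neg]

end Involution

lemma sum_neg_one_pow_descentNum :
    ∑ σ : Perm (Fin n), (-1 : ℤ) ^ descentNum σ =
      ∑ σ : Perm (Fin n) with nonTurning σ = ∅, (-1 : ℤ) ^ descentNum σ := by
  rw [← sum_filter_add_sum_filter_not univ (fun σ => nonTurning σ = ∅), add_eq_left]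
  have hne : ∀ σ ∈ ({σ | ¬nonTurning σ = ∅} : Finset (Perm (Fin n))),
      (nonTurning σ).Nonempty := fun σ hσ =>
    nonempty_iff_ne_empty.mpr (mem_filter.mp hσ).2
  refine sum_involution (fun σ _ => hopMin σ) (fun σ hσ => ?_) (fun σ hσ _ heq => ?_)
    (fun σ hσ => ?_) (fun σ hσ => hopMin_hopMin (hne σ hσ))
  · rw [neg_one_pow_descentNum_hopMin (hne σ hσ), add_neg_cancel]
  · have := neg_one_pow_descentNum_hopMin (hne σ hσ)
    rw [heq] at this
    rcases neg_one_pow_eq_or ℤ (descentNum σ) with h | h <;> rw [h] at this <;> norm_num at this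
  · simpa [nonTurning_hopMin (hne σ hσ)] using hσ

lemma nonTurning_eq_empty_iff (σ : Perm (Fin n)) :
    nonTurning σ = ∅ ↔ ∀ s ≤ n, (IsDescent σ s ↔ Odd s) := by
  refine ⟨fun h s hs => ?_, fun h => eq_empty_iff_forall_notMem.mpr fun y hy => ?_⟩
  · induction s with
    | zero => exact iff_of_false (not_isDescent_zero σ) (by decide)
    | succ s ih =>
      have hturn := word_mem_nonTurning_iff σ (z := s + 1) (by omega) hs
      simp only [h, notMem_empty, false_iff, Nat.add_sub_cancel] at hturn
      rw [Nat.odd_add_one, ← ih (by omega)]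
      tauto
  · obtain ⟨z, hz1, hzn, rfl⟩ := exists_word_eq_of_mem_nonTurning hy
    rw [word_mem_nonTurning_iff σ hz1 hzn, h _ (by omega), h _ hzn] at hy
    obtain ⟨s, rfl⟩ : ∃ s, z = s + 1 := ⟨z - 1, by omega⟩
    rw [Nat.add_sub_cancel, Nat.odd_add_one, Nat.not_odd_iff_even] at hy
    exact iff_not_self (hy.trans Nat.not_odd_iff_even.symm)

lemma filter_nonTurning_eq_empty_of_even (hn : 1 ≤ n) (he : Even n) :
    ({σ | nonTurning σ = ∅} : Finset (Perm (Fin n))) = ∅ :=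
  filter_false_of_mem fun σ _ h => Nat.not_odd_iff_even.mpr he
    (((nonTurning_eq_empty_iff σ).mp h n le_rfl).mp (isDescent_last σ hn))

lemma card_filter_odd_range (m : ℕ) : #{s ∈ range m | Odd s} = m / 2 := by
  induction m with
  | zero => rfl
  | succ m ih =>
    rw [range_add_one, filter_insert]
    split_ifs with h
    · rw [card_insert_of_notMem (by simp), ih]
      rw [Nat.odd_iff] at h
      omega
    · rw [ih]
      rw [Nat.not_odd_iff_even, Nat.even_iff] at h
      omega

lemma descentNum_of_nonTurning_eq_empty {σ : Perm (Fin n)} (h : nonTurning σ = ∅) :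
    descentNum σ = (n + 1) / 2 := by
  rw [descentNum, filter_congr fun s hs =>
    (nonTurning_eq_empty_iff σ).mp h s (Nat.lt_succ_iff.mp (mem_range.mp hs)),
    card_filter_odd_range]

lemma nonTurning_eq_empty_iff_of_odd (σ : Perm (Fin n)) (hn : Odd n) :
    nonTurning σ = ∅ ↔ ∀ z (h : z + 1 < n), (σ ⟨z + 1, h⟩ < σ ⟨z, by omega⟩ ↔ Even z) := by
  rw [nonTurning_eq_empty_iff]
  refine ⟨fun h z hz => ?_, fun h s hs => ?_⟩
  · rw [← isDescent_succ_iff σ hz, h _ hz.le, Nat.odd_add_one, Nat.not_odd_iff_even]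
  rcases Nat.eq_zero_or_pos s with rfl | hs0
  · exact iff_of_false (not_isDescent_zero σ) (by decide)
  rcases hs.lt_or_eq with hsn | rfl
  · obtain ⟨z, rfl⟩ : ∃ z, s = z + 1 := ⟨s - 1, by omega⟩
    rw [isDescent_succ_iff σ hsn, h z hsn, Nat.odd_add_one, Nat.not_odd_iff_even]
  · exact iff_of_true (isDescent_last σ hn.pos) hn

lemma zigzag_revPerm_mul_iff (σ : Perm (Fin n)) :
    (∀ z : ℕ, ∀ h : z + 1 < n,
      if z % 2 = 0 then (Fin.revPerm * σ : Perm (Fin n)) ⟨z, Nat.lt_of_succ_lt h⟩ <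
        (Fin.revPerm * σ : Perm (Fin n)) ⟨z + 1, h⟩
      else (Fin.revPerm * σ : Perm (Fin n)) ⟨z + 1, h⟩ <
        (Fin.revPerm * σ : Perm (Fin n)) ⟨z, Nat.lt_of_succ_lt h⟩) ↔
    ∀ z (h : z + 1 < n), (σ ⟨z + 1, h⟩ < σ ⟨z, by omega⟩ ↔ Even z) := by
  refine forall_congr' fun z => forall_congr' fun h => ?_
  have hne : σ ⟨z, by omega⟩ ≠ σ ⟨z + 1, h⟩ := σ.injective.ne (by simp)
  simp only [Perm.mul_apply, Fin.revPerm_apply, Fin.rev_lt_rev, ← Nat.even_iff]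
  split_ifs with hz
  · exact (iff_true_right hz).symm
  · rw [iff_false_right hz, not_lt]
    exact ⟨le_of_lt, fun hle => hle.lt_of_ne hne⟩

lemma card_filter_nonTurning_eq_empty (hn : Odd n) :
    #{σ : Perm (Fin n) | nonTurning σ = ∅} = zigzagNum n := by
  rw [zigzagNum, ← Fintype.card_subtype, ← Nat.card_eq_fintype_card]
  exact Nat.card_congr <| (Equiv.mulLeft Fin.revPerm).subtypeEquiv fun σ => by
    rw [nonTurning_eq_empty_iff_of_odd σ hn, Equiv.coe_mulLeft, zigzag_revPerm_mul_iff]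

lemma descentCount_eq_card_filter (σ : Perm (Fin n)) :
    descentCount σ = #{z ∈ range (n - 1) | IsDescent σ (z + 1)} := by
  rw [descentCount, ← Nat.card_eq_finsetCard]
  exact Nat.card_congr <| Equiv.subtypeEquivRight fun z => by
    rw [mem_filter, mem_range]
    exact ⟨fun ⟨h, hlt⟩ => ⟨by omega, (isDescent_succ_iff σ h).mpr hlt⟩,
      fun ⟨h, hd⟩ => ⟨by omega, (isDescent_succ_iff σ (by omega)).mp hd⟩⟩

lemma descentCount_lt (σ : Perm (Fin n)) (hn : 1 ≤ n) : descentCount σ < n := by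
  rw [descentCount_eq_card_filter]
  exact (card_filter_le _ _).trans_lt (by rw [card_range]; omega)

lemma descentNum_eq_descentCount_add_one (σ : Perm (Fin n)) (hn : 1 ≤ n) :
    descentNum σ = descentCount σ + 1 := by
  obtain ⟨m, rfl⟩ : ∃ m, n = m + 1 := ⟨n - 1, by omega⟩
  rw [descentNum, descentCount_eq_card_filter, card_filter, card_filter, sum_range_succ',
    sum_range_succ, if_neg (not_isDescent_zero σ), if_pos (isDescent_last σ hn), Nat.add_sub_cancel]

lemma sum_filter_nonTurning_eq_empty_of_odd (hn : Odd n) :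
    ∑ σ : Perm (Fin n) with nonTurning σ = ∅, (-1 : ℤ) ^ descentNum σ =
      (-1) ^ ((n + 1) / 2) * zigzagNum n := by
  rw [sum_congr rfl fun σ hσ => by rw [descentNum_of_nonTurning_eq_empty (mem_filter.mp hσ).2],
    sum_const, card_filter_nonTurning_eq_empty hn, nsmul_eq_mul, mul_comm]

lemma sum_neg_one_pow_mul_eulerianNum (hn : 1 ≤ n) :
    ∑ ℓ ∈ range n, (-1 : ℤ) ^ ℓ * (eulerianNum n ℓ : ℤ) =
      -∑ σ : Perm (Fin n) with nonTurning σ = ∅, (-1 : ℤ) ^ descentNum σ := by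
  rw [← sum_neg_one_pow_descentNum, ← sum_neg_distrib]
  refine (sum_mul_card_fiber _ (fun σ => descentCount_lt σ hn) _).trans (sum_congr rfl ?_)
  intro σ _
  rw [descentNum_eq_descentCount_add_one σ hn, pow_succ, mul_neg_one, neg_neg]

end ValleyHopping

/-- `Σ_{ℓ=0}^{k−1} (−1)^ℓ · ⟨k, ℓ⟩` equals `0` for even `k` and
`(−1)^((k−1)/2) · E_k` for odd `k`. -/
theorem stmt15 (k : ℕ) (hk : 1 ≤ k) :
    ∑ ℓ ∈ Finset.range k, (-1 : ℤ) ^ ℓ * (eulerianNum k ℓ : ℤ) =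
    if Even k then 0 else (-1 : ℤ) ^ ((k - 1) / 2) * (zigzagNum k : ℤ) := by
  rw [ValleyHopping.sum_neg_one_pow_mul_eulerianNum hk]
  split_ifs with he
  · rw [ValleyHopping.filter_nonTurning_eq_empty_of_even hk he, Finset.sum_empty, neg_zero]
  · obtain ⟨j, rfl⟩ := Nat.not_even_iff_odd.mp he
    rw [ValleyHopping.sum_filter_nonTurning_eq_empty_of_odd ⟨j, rfl⟩,
      show (2 * j + 1 + 1) / 2 = j + 1 by omega, show (2 * j + 1 - 1) / 2 = j by omega, pow_succ]
    ring
end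

section
/- Let k ≥ 1 and 0 ≤ ℓ ≤ k be integers. Then the type-B Eulerian number ⟨B_k, ℓ⟩ satisfies ⟨B_k, ℓ⟩ = Σ_{j=0}^{ℓ} (−1)^j · binom(k+1, j) · (2(ℓ−j)+1)^k. -/
/-- Extension of `w : Fin k → ℤ` to `ℕ` with a leading zero: `wext w 0 = 0` and
`wext w j = w (j-1)` for `1 ≤ j ≤ k` (and `0` beyond). -/
def wext {k : ℕ} (w : Fin k → ℤ) : ℕ → ℤ := fun j =>
  if h : j - 1 < k ∧ 1 ≤ j then w ⟨j - 1, h.1⟩ else 0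

/-- `w : Fin k → ℤ` is a signed permutation of length `k`: `w z = s z · σ z` for a
permutation `σ` of `{1, …, k}` and signs `s z ∈ {−1, 1}`. -/
def IsSignedPerm {k : ℕ} (w : Fin k → ℤ) : Prop :=
  ∃ σ : Equiv.Perm (Fin k),
    ∀ z, w z = ((σ z : ℕ) : ℤ) + 1 ∨ w z = -(((σ z : ℕ) : ℤ) + 1)

/-- The number of descents of a signed permutation, with a leading zero: the number of
indices `z ∈ {0, …, k-1}` with `w z > w (z+1)` where `w 0 = 0` (1-indexed). -/
noncomputable def signedDescentCount {k : ℕ} (w : Fin k → ℤ) : ℕ :=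
  Nat.card {z : ℕ // z < k ∧ wext w (z + 1) < wext w z}

/-- The type-B Eulerian number `⟨B_k, ℓ⟩`: the number of signed permutations of length
`k` with exactly `ℓ` descents. -/
noncomputable def eulerianBNum (k ℓ : ℕ) : ℕ :=
  Nat.card {w : Fin k → ℤ // IsSignedPerm w ∧ signedDescentCount w = ℓ}

/-!
The proof goes through a type-B Worpitzky identity: for every `m`,
`(2m+1)^k = ∑_w binom(m + k - des w, k)`, summed over the signed permutations `w` of length `k`.
To see it, sort a map `f : {1,…,k} → {-m,…,m}` by `|f|`, breaking ties by the signed letter `±i`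
that carries the sign of `f i` (`0` counts as positive). This gives a signed permutation `w` and
a sequence `0 ≤ c₁ ≤ ⋯ ≤ c_k ≤ m` that increases strictly at the descents of `w` (with
`w 0 = 0`), and `f ↦ (w, c)` is a bijection onto such pairs. The map
`c_z ↦ c_z + (z - 1) - #{descents < z}` makes `c` strictly increasing below `m + k - des w`,
so there are `binom(m + k - des w, k)` sequences `c` for each `w`.
Because `∑_j (-1)^j binom(k+1, j) binom(n - j + k, k) = [n = 0]` (compare coefficients in
`(1 - X)^(k+1) · (1 - X)^(-(k+1)) = 1`), the alternating sum of the identity at `m = ℓ - j`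
picks out the signed permutations with exactly `ℓ` descents.
-/

open Finset

namespace TypeBEulerian

variable {k m : ℕ}

lemma wext_zero (w : Fin k → ℤ) : wext w 0 = 0 := by simp [wext]

lemma wext_succ (w : Fin k → ℤ) {y : ℕ} (hy : y < k) : wext w (y + 1) = w ⟨y, hy⟩ := by
  simp [wext, hy]

lemma wext_val_succ (w : Fin k → ℤ) (z : Fin k) : wext w (z + 1) = w z := wext_succ w z.isLt

lemma wext_nonneg {w : Fin k → ℤ} (hw : ∀ z, 0 ≤ w z) (y : ℕ) : 0 ≤ wext w y := by
  unfold wext; split <;> simp [hw]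

abbrev SignedPerm (k : ℕ) := Equiv.Perm (Fin k) × (Fin k → Bool)

def signedLetter (b : Bool) (i : Fin k) : ℤ := if b then (i : ℤ) + 1 else -((i : ℤ) + 1)

lemma signedLetter_inj {b b' : Bool} {i i' : Fin k} :
    signedLetter b i = signedLetter b' i' ↔ b = b' ∧ i = i' := by
  refine ⟨fun h => ?_, fun ⟨hb, hi⟩ => hb ▸ hi ▸ rfl⟩
  cases b <;> cases b' <;> simp only [signedLetter, Bool.false_eq_true, if_false, if_true] at h <;>
    simp [Fin.ext_iff] <;> omega

lemma signedLetter_neg_iff {b : Bool} {i : Fin k} : signedLetter b i < 0 ↔ b = false := by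
  cases b <;> simp [signedLetter] <;> omega

namespace SignedPerm

def word (p : SignedPerm k) (z : Fin k) : ℤ := signedLetter (p.2 z) (p.1 z)

lemma word_injective (p : SignedPerm k) : Function.Injective p.word :=
  fun _ _ h => p.1.injective (signedLetter_inj.1 h).2

lemma injective_word : Function.Injective (word : SignedPerm k → Fin k → ℤ) := by
  intro p q h
  have h' z := signedLetter_inj.1 (congrFun h z)
  exact Prod.ext (Equiv.ext fun z => (h' z).2) (funext fun z => (h' z).1)

end SignedPerm

lemma isSignedPerm_iff {w : Fin k → ℤ} :
    IsSignedPerm w ↔ ∃ p : SignedPerm k, p.word = w := by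
  constructor
  · rintro ⟨σ, hσ⟩
    refine ⟨(σ, fun z => decide (0 < w z)), funext fun z => ?_⟩
    rcases hσ z with h | h <;> simp only [SignedPerm.word, signedLetter, h, decide_eq_true_eq] <;>
      split_ifs <;> omega
  · rintro ⟨p, rfl⟩
    exact ⟨p.1, fun z => by unfold SignedPerm.word signedLetter; split <;> simp⟩

def descents (w : Fin k → ℤ) : Finset ℕ := {z ∈ range k | wext w (z + 1) < wext w z}

lemma mem_descents {w : Fin k → ℤ} {y : ℕ} :
    y ∈ descents w ↔ y < k ∧ wext w (y + 1) < wext w y := by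
  simp [descents]

lemma descents_subset_range (w : Fin k → ℤ) : descents w ⊆ range k := filter_subset _ _

lemma card_descents_le (w : Fin k → ℤ) : #(descents w) ≤ k :=
  (card_le_card (descents_subset_range w)).trans (card_range k).le

lemma signedDescentCount_eq_card_descents (w : Fin k → ℤ) :
    signedDescentCount w = #(descents w) := by
  rw [signedDescentCount, ← Nat.card_eq_finsetCard]
  exact Nat.card_congr (Equiv.subtypeEquivRight fun z => by simp [descents])

lemma eulerianBNum_eq_card (k ℓ : ℕ) :
    eulerianBNum k ℓ = #{p : SignedPerm k | #(descents p.word) = ℓ} := by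
  rw [← Fintype.card_subtype, ← Nat.card_eq_fintype_card, eulerianBNum]
  symm
  refine Nat.card_congr (Equiv.ofBijective (fun p => ⟨p.1.word, isSignedPerm_iff.2 ⟨p, rfl⟩,
    (signedDescentCount_eq_card_descents _).trans p.2⟩) ⟨fun p q h => ?_, ?_⟩)
  · exact Subtype.ext (SignedPerm.injective_word (congrArg Subtype.val h))
  · rintro ⟨w, hw, hℓ⟩
    obtain ⟨p, rfl⟩ := isSignedPerm_iff.1 hw
    exact ⟨⟨p, (signedDescentCount_eq_card_descents _).symm.trans hℓ⟩, rfl⟩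

lemma monotone_fin_of_le_succ {α : Type*} [Preorder α] {f : Fin k → α}
    (h : ∀ y (hy : y + 1 < k), f ⟨y, by omega⟩ ≤ f ⟨y + 1, hy⟩) : Monotone f := by
  cases k with
  | zero => exact fun i => i.elim0
  | succ n => exact Fin.monotone_iff_le_succ.2 fun i => h i i.succ.isLt

lemma strictMono_fin_of_lt_succ {α : Type*} [Preorder α] {f : Fin k → α}
    (h : ∀ y (hy : y + 1 < k), f ⟨y, by omega⟩ < f ⟨y + 1, hy⟩) : StrictMono f := by
  cases k with
  | zero => exact fun i => i.elim0
  | succ n => exact Fin.strictMono_iff_lt_succ.2 fun i => h i i.succ.isLt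

lemma monotone_sub_val_of_strictMono {N : ℕ} {d : Fin k → Fin N} (hd : StrictMono d) :
    Monotone fun z => ((d z : ℕ) : ℤ) - z := by
  refine monotone_fin_of_le_succ fun y hy => ?_
  have : (d ⟨y, by omega⟩ : ℕ) < d ⟨y + 1, hy⟩ := hd (Fin.mk_lt_mk.2 y.lt_succ_self)
  dsimp only
  omega

def IsCompatible (D : Finset ℕ) (c : Fin k → ℤ) : Prop :=
  ∀ y < k, wext c y ≤ wext c (y + 1) ∧ (y ∈ D → wext c y < wext c (y + 1))

abbrev CompatibleSeq (k m : ℕ) (D : Finset ℕ) : Type :=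
  {c : Fin k → Fin (m + 1) // IsCompatible D fun z => (c z : ℤ)}

def countBelow (D : Finset ℕ) (y : ℕ) : ℕ := #{x ∈ range y | x ∈ D}

section countBelow

variable {D : Finset ℕ}

lemma countBelow_zero : countBelow D 0 = 0 := by simp [countBelow]

lemma countBelow_succ (y : ℕ) :
    countBelow D (y + 1) = countBelow D y + if y ∈ D then 1 else 0 := by
  unfold countBelow
  rw [range_add_one, filter_insert]
  split_ifs <;> simp [card_insert_of_notMem]

lemma countBelow_mono {y y' : ℕ} (h : y ≤ y') : countBelow D y ≤ countBelow D y' :=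
  card_le_card (filter_subset_filter _ (range_subset_range.2 h))

lemma countBelow_add_le (y n : ℕ) : countBelow D (y + n) ≤ countBelow D y + n := by
  induction n with
  | zero => rfl
  | succ n ih => rw [← add_assoc, countBelow_succ]; split_ifs <;> omega

lemma countBelow_of_subset_range (hD : D ⊆ range k) : countBelow D k = #D := by
  rw [countBelow, filter_mem_eq_inter, inter_eq_right.2 hD]

lemma countBelow_le_wext {c : Fin k → ℤ} (hc : IsCompatible D c) :
    ∀ y ≤ k, (countBelow D y : ℤ) ≤ wext c y := by
  intro y
  induction y with
  | zero => simp [countBelow_zero, wext_zero]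
  | succ y ih =>
    intro hy
    have := ih (by omega)
    have := hc y (by omega)
    rw [countBelow_succ]
    split_ifs with hyD
    · have := this.2 hyD; push_cast; omega
    · have := this.1; push_cast; omega

end countBelow

lemma val_le_of_strictMono {N : ℕ} {d : Fin k → Fin N} (hd : StrictMono d) (z : Fin k) :
    (z : ℕ) ≤ d z := by
  have := monotone_sub_val_of_strictMono hd (show (⟨0, z.pos⟩ : Fin k) ≤ z from Nat.zero_le _)
  dsimp only at this
  omega

lemma strictMono_shift {D : Finset ℕ} {c : Fin k → Fin (m + 1)}
    (hc : IsCompatible D fun z => (c z : ℤ)) :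
    StrictMono fun z : Fin k => (c z : ℕ) + z - countBelow D (z + 1) := by
  refine strictMono_fin_of_lt_succ fun y hy => ?_
  have h1 := countBelow_le_wext hc (y + 1) (by omega)
  have h2 := hc (y + 1) hy
  rw [wext_succ _ (by omega)] at h1 h2
  rw [wext_succ _ hy] at h2
  simp only
  rw [countBelow_succ (y + 1)]
  split_ifs with hyD
  · have := h2.2 hyD; omega
  · have := h2.1; omega

lemma isCompatible_unshift {D : Finset ℕ} {N : ℕ} {d : Fin k → Fin N} (hd : StrictMono d) :
    IsCompatible D fun z => (((d z : ℕ) + countBelow D (z + 1) - z : ℕ) : ℤ) := by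
  have hcast : (fun z : Fin k => (((d z : ℕ) + countBelow D (z + 1) - z : ℕ) : ℤ)) =
      fun z => ((d z : ℕ) : ℤ) + countBelow D (z + 1) - z := by
    ext z
    have := val_le_of_strictMono hd z
    push_cast [show (z : ℕ) ≤ d z + countBelow D (z + 1) by omega]
    rfl
  rw [hcast]
  intro y hy
  rcases y with _ | x
  · rw [wext_zero, wext_succ _ hy, countBelow_succ, countBelow_zero]
    dsimp only
    split_ifs with h0
    · exact ⟨by omega, fun _ => by omega⟩
    · exact ⟨by omega, fun h => absurd h h0⟩
  · have hx : x < k := by omega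
    rw [wext_succ _ hx, wext_succ _ hy, countBelow_succ (x + 1)]
    have := hd (Fin.mk_lt_mk.2 x.lt_succ_self : (⟨x, hx⟩ : Fin k) < ⟨x + 1, hy⟩)
    have := val_le_of_strictMono hd ⟨x, hx⟩
    dsimp only at *
    split_ifs with hxD
    · exact ⟨by omega, fun _ => by omega⟩
    · exact ⟨by omega, fun h => absurd h hxD⟩

section shift

variable {D : Finset ℕ} (hD : D ⊆ range k)
include hD

lemma shift_lt {c : Fin k → Fin (m + 1)} (hc : IsCompatible D fun z => (c z : ℤ)) (z : Fin k) :
    (c z : ℕ) + z - countBelow D (z + 1) < m + k - #D := by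
  have h1 := countBelow_le_wext hc (z + 1) z.isLt
  rw [wext_val_succ] at h1
  have h2 := countBelow_add_le (D := D) (z + 1) (k - (z + 1))
  rw [Nat.add_sub_cancel' z.isLt, countBelow_of_subset_range hD] at h2
  have := (c z).isLt
  omega

lemma unshift_lt {d : Fin k → Fin (m + k - #D)} (hd : StrictMono d) (z : Fin k) :
    (d z : ℕ) + countBelow D (z + 1) - z < m + 1 := by
  have hk : k - 1 < k := by have := z.isLt; omega
  have hlast := monotone_sub_val_of_strictMono hd
    (show z ≤ ⟨k - 1, hk⟩ from Nat.le_sub_one_of_lt z.isLt)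
  have := (d ⟨k - 1, hk⟩).isLt
  have := countBelow_of_subset_range hD ▸
    countBelow_mono (D := D) (show (z : ℕ) + 1 ≤ k from z.isLt)
  have := card_range k ▸ card_le_card hD
  dsimp only at hlast
  omega

def compatibleEquivStrictMono :
    CompatibleSeq k m D ≃
      {d : Fin k → Fin (m + k - #D) // StrictMono d} where
  toFun c := ⟨fun z => ⟨_, shift_lt hD c.2 z⟩, fun _ _ h => strictMono_shift c.2 h⟩
  invFun d := ⟨fun z => ⟨_, unshift_lt hD d.2 z⟩, isCompatible_unshift d.2⟩
  left_inv c := by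
    ext z
    have := countBelow_le_wext c.2 (z + 1) z.isLt
    rw [wext_val_succ] at this
    simp only
    omega
  right_inv d := by
    ext z
    have := val_le_of_strictMono d.2 z
    simp only
    omega

end shift

lemma card_strictMono (k N : ℕ) :
    Nat.card {d : Fin k → Fin N // StrictMono d} = N.choose k := by
  let e : {d : Fin k → Fin N // StrictMono d} ≃ (Fin k ↪o Fin N) :=
    { toFun d := OrderEmbedding.ofStrictMono d.1 d.2
      invFun e := ⟨e, e.strictMono⟩
      left_inv _ := rfl
      right_inv _ := rfl }
  rw [Nat.card_congr (e.trans Set.powersetCard.ofFinEmbEquiv), Set.powersetCard.card, Nat.card_fin]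

lemma card_compatibleSeq {D : Finset ℕ} (hD : D ⊆ range k) :
    Nat.card (CompatibleSeq k m D) =
      (m + k - #D).choose k := by
  rw [Nat.card_congr (compatibleEquivStrictMono hD), card_strictMono]

lemma pos_of_isCompatible_descents {w c : Fin k → ℤ} (hc : IsCompatible (descents w) c)
    (hc₀ : ∀ z, 0 ≤ c z) : ∀ y ≤ k, wext w y < 0 → 0 < wext c y := by
  intro y
  induction y with
  | zero => simp [wext_zero]
  | succ y ih =>
    intro hy hw
    obtain ⟨hle, hlt⟩ := hc y (by omega)
    by_cases hdes : wext w (y + 1) < wext w y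
    · have := wext_nonneg hc₀ y
      have := hlt (mem_descents.2 ⟨by omega, hdes⟩)
      omega
    · have := ih (by omega) (by omega)
      omega

lemma isCompatible_descents_iff {w c : Fin k → ℤ} (hw : Function.Injective w)
    (hc₀ : ∀ z, 0 ≤ c z) :
    IsCompatible (descents w) c ↔
      StrictMono (fun z => toLex (c z, w z)) ∧ ∀ z, w z < 0 → 0 < c z := by
  constructor
  · intro hc
    refine ⟨strictMono_fin_of_lt_succ fun y hy => ?_, fun z hz => ?_⟩
    · obtain ⟨hle, hlt⟩ := hc (y + 1) hy
      rw [wext_succ _ hy, wext_succ _ (by omega)] at hle hlt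
      rw [Prod.Lex.toLex_lt_toLex]
      rcases hle.lt_or_eq with h | h
      · exact Or.inl h
      · refine Or.inr ⟨h, lt_of_le_of_ne ?_ (hw.ne (by simp))⟩
        by_contra hdes
        have := hlt (mem_descents.2 ⟨hy, by rw [wext_succ _ hy, wext_succ _ (by omega)]; omega⟩)
        omega
    · have := pos_of_isCompatible_descents hc hc₀ (z + 1) z.isLt
      rw [wext_val_succ, wext_val_succ] at this
      exact this hz
  · rintro ⟨hmono, hpos⟩ y hy
    rcases y with _ | x
    · rw [wext_zero, wext_succ _ hy, mem_descents, wext_succ _ hy, wext_zero]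
      exact ⟨hc₀ _, fun h => hpos _ h.2⟩
    · have hx : x < k := by omega
      have hlex := hmono (Fin.mk_lt_mk.2 x.lt_succ_self : (⟨x, hx⟩ : Fin k) < ⟨x + 1, hy⟩)
      rw [Prod.Lex.toLex_lt_toLex] at hlex
      rw [mem_descents, wext_succ c hx, wext_succ c hy, wext_succ w hx, wext_succ w hy]
      dsimp only at hlex
      omega

def centered (f : Fin k → Fin (2 * m + 1)) (i : Fin k) : ℤ := (f i : ℤ) - m

lemma natAbs_centered_le (f : Fin k → Fin (2 * m + 1)) (i : Fin k) :
    (centered f i).natAbs ≤ m := by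
  have := (f i).isLt
  unfold centered
  omega

def sortKey (f : Fin k → Fin (2 * m + 1)) (i : Fin k) : ℤ ×ₗ ℤ :=
  toLex (|centered f i|, signedLetter (decide (0 ≤ centered f i)) i)

lemma sortKey_injective (f : Fin k → Fin (2 * m + 1)) : Function.Injective (sortKey f) :=
  fun _ _ h => (signedLetter_inj.1 (congrArg Prod.snd (toLex.injective h))).2

def sortPerm (f : Fin k → Fin (2 * m + 1)) : Equiv.Perm (Fin k) := Tuple.sort (sortKey f)

def signedPermOf (f : Fin k → Fin (2 * m + 1)) : SignedPerm k :=
  (sortPerm f, fun z => decide (0 ≤ centered f (sortPerm f z)))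

def absSeqOf (f : Fin k → Fin (2 * m + 1)) (z : Fin k) : Fin (m + 1) :=
  ⟨(centered f (sortPerm f z)).natAbs, Nat.lt_succ_of_le (natAbs_centered_le f _)⟩

def valuesOf (p : SignedPerm k) (c : Fin k → Fin (m + 1)) (j : Fin k) : Fin (2 * m + 1) :=
  let z := p.1.symm j
  if p.2 z then ⟨m + c z, by omega⟩ else ⟨m - c z, by omega⟩

lemma sortKey_sortPerm (f : Fin k → Fin (2 * m + 1)) (z : Fin k) :
    sortKey f (sortPerm f z) = toLex (((absSeqOf f z : ℕ) : ℤ), (signedPermOf f).word z) := by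
  simp [sortKey, absSeqOf, signedPermOf, SignedPerm.word]

lemma isCompatible_absSeqOf (f : Fin k → Fin (2 * m + 1)) :
    IsCompatible (descents (signedPermOf f).word) fun z => (absSeqOf f z : ℤ) := by
  refine (isCompatible_descents_iff (SignedPerm.word_injective _) (fun _ => by positivity)).2
    ⟨?_, fun z hz => ?_⟩
  · simp_rw [← sortKey_sortPerm]
    exact (Tuple.monotone_sort _).strictMono_of_injective
      ((sortKey_injective f).comp (Equiv.injective _))
  · rw [SignedPerm.word, signedLetter_neg_iff] at hz
    simp only [signedPermOf, decide_eq_false_iff_not, not_le] at hz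
    simp only [absSeqOf]
    omega

lemma valuesOf_signedPermOf_absSeqOf (f : Fin k → Fin (2 * m + 1)) :
    valuesOf (signedPermOf f) (absSeqOf f) = f := by
  ext j
  have := (f j).isLt
  simp only [valuesOf, signedPermOf, absSeqOf, centered, Equiv.apply_symm_apply]
  split_ifs with h <;> simp only [decide_eq_true_eq] at h <;> dsimp only <;> omega

lemma centered_valuesOf (p : SignedPerm k) (c : Fin k → Fin (m + 1)) (z : Fin k) :
    centered (valuesOf p c) (p.1 z) = if p.2 z then (c z : ℤ) else -(c z : ℤ) := by
  have := (c z).isLt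
  unfold centered valuesOf
  simp only [Equiv.symm_apply_apply]
  split_ifs <;> push_cast <;> omega

lemma abs_centered_valuesOf (p : SignedPerm k) (c : Fin k → Fin (m + 1)) (z : Fin k) :
    |centered (valuesOf p c) (p.1 z)| = c z := by
  rw [centered_valuesOf]
  split_ifs <;> simp

section valuesOf

variable {p : SignedPerm k} {c : Fin k → Fin (m + 1)}
  (hc : IsCompatible (descents p.word) fun z => (c z : ℤ))
include hc

lemma decide_nonneg_centered_valuesOf (z : Fin k) :
    decide (0 ≤ centered (valuesOf p c) (p.1 z)) = p.2 z := by
  have hpos := ((isCompatible_descents_iff p.word_injective (fun _ => by positivity)).1 hc).2 z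
  rw [SignedPerm.word, signedLetter_neg_iff] at hpos
  rw [centered_valuesOf]
  cases h : p.2 z
  · exact decide_eq_false (by simp only [Bool.false_eq_true, if_false]; have := hpos h; omega)
  · exact decide_eq_true (by simp)

lemma sortPerm_valuesOf : sortPerm (valuesOf p c) = p.1 := by
  have hkey : sortKey (valuesOf p c) ∘ p.1 = fun z => toLex ((c z : ℤ), p.word z) := by
    ext1 z
    simp only [Function.comp, sortKey, decide_nonneg_centered_valuesOf hc, abs_centered_valuesOf]
    rfl
  have hmono := ((isCompatible_descents_iff p.word_injective (fun _ => by positivity)).1 hc).1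
  rw [← hkey] at hmono
  exact (Tuple.eq_sort_iff.2 ⟨hmono.monotone, fun i j hij h => absurd h (hmono hij).ne⟩).symm

lemma signedPermOf_valuesOf : signedPermOf (valuesOf p c) = p := by
  refine Prod.ext (sortPerm_valuesOf hc) (funext fun z => ?_)
  simp only [signedPermOf, sortPerm_valuesOf hc, decide_nonneg_centered_valuesOf hc]

lemma absSeqOf_valuesOf : absSeqOf (valuesOf p c) = c := by
  ext z
  have := abs_centered_valuesOf p c z
  rw [← Int.natCast_natAbs] at this
  simp only [absSeqOf, sortPerm_valuesOf hc]
  exact_mod_cast this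

end valuesOf

def valuesEquiv (k m : ℕ) : (Fin k → Fin (2 * m + 1)) ≃
    Σ p : SignedPerm k, CompatibleSeq k m (descents p.word) where
  toFun f := ⟨signedPermOf f, absSeqOf f, isCompatible_absSeqOf f⟩
  invFun pc := valuesOf pc.1 pc.2
  left_inv := valuesOf_signedPermOf_absSeqOf
  right_inv := fun ⟨_, _, hc⟩ =>
    Sigma.subtype_ext (signedPermOf_valuesOf hc) (absSeqOf_valuesOf hc)

theorem sum_choose_card_descents_eq_pow (k m : ℕ) :
    ∑ p : SignedPerm k, (m + k - #(descents p.word)).choose k = (2 * m + 1) ^ k := by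
  calc _ = ∑ p : SignedPerm k,
        Nat.card (CompatibleSeq k m (descents p.word)) :=
        sum_congr rfl fun p _ => (card_compatibleSeq (descents_subset_range _)).symm
    _ = Nat.card (Fin k → Fin (2 * m + 1)) := by
        rw [Nat.card_congr (valuesEquiv k m), Nat.card_sigma]
    _ = _ := by simp

section inversion

open PowerSeries

lemma coeff_one_sub_X_pow (r j : ℕ) :
    coeff j ((1 - X : ℤ⟦X⟧) ^ r) = (-1) ^ j * r.choose j := by
  have h : (1 - X : ℤ⟦X⟧) ^ r =
      rescale (-1 : ℤ) (((1 + Polynomial.X) ^ r : Polynomial ℤ) : ℤ⟦X⟧) := by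
    simp [sub_eq_add_neg]
  rw [h, coeff_rescale, Polynomial.coeff_coe, Polynomial.coeff_one_add_X_pow]

lemma sum_alternating_choose_mul_choose_add (k n : ℕ) :
    ∑ j ∈ range (n + 1), (-1 : ℤ) ^ j * (k + 1).choose j * (k + (n - j)).choose k =
      if n = 0 then 1 else 0 := by
  have h := congrArg (coeff n) (invOneSubPow ℤ (k + 1)).inv_val
  rw [invOneSubPow_inv_eq_one_sub_pow, coeff_mul, coeff_one,
    Finset.Nat.sum_antidiagonal_eq_sum_range_succ_mk] at h
  rw [← h]
  refine sum_congr rfl fun j _ => ?_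
  rw [coeff_one_sub_X_pow, invOneSubPow_val_succ_eq_mk_add_choose, coeff_mk]

end inversion

lemma sum_alternating_choose_mul_choose_sub {k t : ℕ} (ht : t ≤ k) (ℓ : ℕ) :
    ∑ j ∈ range (ℓ + 1), (-1 : ℤ) ^ j * (k + 1).choose j * (ℓ - j + k - t).choose k =
      if t = ℓ then 1 else 0 := by
  by_cases hlt : ℓ < t
  · rw [if_neg (by omega)]
    refine sum_eq_zero fun j _ => ?_
    rw [Nat.choose_eq_zero_of_lt (n := ℓ - j + k - t) (by omega)]
    simp
  obtain ⟨n, rfl⟩ := Nat.exists_eq_add_of_le (not_lt.1 hlt)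
  rw [← sum_subset (range_subset_range.2 (by omega : n + 1 ≤ t + n + 1)) fun j hj hjn => ?_]
  · simp only [left_eq_add]
    rw [← sum_alternating_choose_mul_choose_add k n]
    refine sum_congr rfl fun j hj => ?_
    rw [show t + n - j + k - t = k + (n - j) by simp only [mem_range] at hj; omega]
  · simp only [mem_range] at hj hjn
    rw [Nat.choose_eq_zero_of_lt (n := t + n - j + k - t) (by omega)]
    simp

end TypeBEulerian

open TypeBEulerian

theorem stmt16_general (k ℓ : ℕ) :
    (eulerianBNum k ℓ : ℤ) =
    ∑ j ∈ Finset.range (ℓ + 1),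
      (-1 : ℤ) ^ j * ((k + 1).choose j : ℤ) * (2 * ((ℓ : ℤ) - j) + 1) ^ k := by
  have hpow : ∀ j ∈ range (ℓ + 1), (2 * ((ℓ : ℤ) - j) + 1) ^ k =
      ∑ p : SignedPerm k, ((ℓ - j + k - #(descents p.word)).choose k : ℤ) := by
    intro j hj
    have : ((2 * (ℓ - j) + 1 : ℕ) : ℤ) = 2 * ((ℓ : ℤ) - j) + 1 := by
      rw [mem_range] at hj
      omega
    rw [← this, ← Nat.cast_pow, ← sum_choose_card_descents_eq_pow, Nat.cast_sum]
  calc (eulerianBNum k ℓ : ℤ)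
      = ∑ p : SignedPerm k, if #(descents p.word) = ℓ then 1 else 0 := by
        rw [eulerianBNum_eq_card, sum_boole]
    _ = ∑ p : SignedPerm k, ∑ j ∈ range (ℓ + 1),
          (-1 : ℤ) ^ j * (k + 1).choose j * (ℓ - j + k - #(descents p.word)).choose k :=
        sum_congr rfl fun p _ =>
          (sum_alternating_choose_mul_choose_sub (card_descents_le _) ℓ).symm
    _ = _ := by
      rw [sum_comm]
      refine sum_congr rfl fun j hj => ?_
      rw [hpow j hj, mul_sum]

/-- `⟨B_k, ℓ⟩ = Σ_{j=0}^{ℓ} (−1)^j · binom(k+1, j) · (2(ℓ−j)+1)^k`. -/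
theorem stmt16 (k ℓ : ℕ) (hk : 1 ≤ k) (hl : ℓ ≤ k) :
    (eulerianBNum k ℓ : ℤ) =
    ∑ j ∈ Finset.range (ℓ + 1),
      (-1 : ℤ) ^ j * ((k + 1).choose j : ℤ) * (2 * ((ℓ : ℤ) - j) + 1) ^ k :=
  stmt16_general k ℓ
end

section
/- Let k ≥ 1 and 0 ≤ ℓ ≤ k be integers. Then the type-B Eulerian number ⟨B_k, ℓ⟩ satisfies ⟨B_k, ℓ⟩ = 2^k · k! · (F_k(ℓ + 1/2) − F_k(ℓ − 1/2)). -/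
/-!
Inserting `k + 1` or `-(k + 1)` into one of the `k + 1` slots of a signed permutation of
length `k` gives every signed permutation of length `k + 1` exactly once. Such an insertion
keeps the number `d` of descents or raises it by one, and exactly `2d + 1` of the `2(k + 1)`
insertions keep it; hence
`⟨B_{k+1}, ℓ+1⟩ = (2ℓ + 3)⟨B_k, ℓ+1⟩ + (2k + 1 - 2ℓ)⟨B_k, ℓ⟩`.
The alternating sum `∑_{j ≤ ℓ} (-1)^j C(k+1, j) (2ℓ + 1 - 2j)^k` obeys the same recurrence
and initial values, and by Pascal's rule it is the difference of
`∑_{j ≤ n} (-1)^j C(k, j) (2n + 1 - 2j)^k = 2^k k! F_k(n + 1/2)` at `n = ℓ` and `n = ℓ - 1`.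
-/

open Finset

section Descents

variable {α : Type*} [LinearOrder α]

def descentsBelow (f : ℕ → α) (n : ℕ) : ℕ :=
  ∑ z ∈ range n, if f (z + 1) < f z then 1 else 0

def insertAfter (f : ℕ → α) (P : ℕ) (v : α) (j : ℕ) : α :=
  if j ≤ P then f j else if j = P + 1 then v else f (j - 1)

lemma descentsBelow_insertAfter (f : ℕ → α) (v : α) {P n : ℕ} (hP : P ≤ n) :
    descentsBelow (insertAfter f P v) (n + 1) + (if P < n ∧ f (P + 1) < f P then 1 else 0) =
      descentsBelow f n + (if v < f P then 1 else 0) +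
        (if P < n ∧ f (P + 1) < v then 1 else 0) := by
  obtain ⟨m, rfl⟩ := Nat.exists_eq_add_of_le hP
  have head : ∀ z ∈ range P, (if insertAfter f P v (z + 1) < insertAfter f P v z then 1 else 0)
      = (if f (z + 1) < f z then 1 else 0) := by
    intro z hz
    have := mem_range.mp hz
    simp only [insertAfter, if_pos (show z + 1 ≤ P by omega), if_pos (show z ≤ P by omega)]
  unfold descentsBelow
  rw [add_assoc P m 1, sum_range_add _ P (m + 1), sum_range_add _ P m, sum_congr rfl head,
    sum_range_succ']
  cases m with
  | zero => simp [insertAfter]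
  | succ m =>
    rw [sum_range_succ' _ m, sum_range_succ' _ m]
    have tail : ∀ i ∈ range m,
        (if insertAfter f P v (P + (i + 1 + 1) + 1) < insertAfter f P v (P + (i + 1 + 1)) then 1
          else 0) = (if f (P + (i + 1) + 1) < f (P + (i + 1)) then 1 else 0) := by
      intro i _
      simp only [insertAfter, if_neg (show ¬P + (i + 1 + 1) + 1 ≤ P by omega),
        if_neg (show ¬P + (i + 1 + 1) ≤ P by omega),
        if_neg (show ¬P + (i + 1 + 1) + 1 = P + 1 by omega),
        if_neg (show ¬P + (i + 1 + 1) = P + 1 by omega)]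
      congr 2
    rw [sum_congr rfl tail]
    simp [insertAfter]
    omega

lemma descentsBelow_insertAfter_of_lt (f : ℕ → α) {v : α} {P n : ℕ} (hP : P ≤ n)
    (hv : ∀ j ≤ n, f j < v) :
    descentsBelow (insertAfter f P v) (n + 1) =
      descentsBelow f n + if P = n ∨ f (P + 1) < f P then 0 else 1 := by
  have key := descentsBelow_insertAfter f v hP
  rw [if_neg (hv P hP).not_gt] at key
  rcases hP.lt_or_eq with hPn | rfl
  · rw [if_pos (⟨hPn, hv _ hPn⟩ : P < n ∧ f (P + 1) < v)] at key
    simp only [hPn, hPn.ne, true_and, false_or] at key ⊢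
    split_ifs at key ⊢ <;> omega
  · simpa using key

lemma descentsBelow_insertAfter_of_gt (f : ℕ → α) {v : α} {P n : ℕ} (hP : P ≤ n)
    (hv : ∀ j ≤ n, v < f j) :
    descentsBelow (insertAfter f P v) (n + 1) =
      descentsBelow f n + if P < n ∧ f (P + 1) < f P then 0 else 1 := by
  have key := descentsBelow_insertAfter f v hP
  rw [if_pos (hv P hP)] at key
  by_cases hPn : P < n
  · rw [if_neg (fun h => (hv _ hPn).not_gt h.2 : ¬(P < n ∧ f (P + 1) < v))] at key
    simp only [hPn, true_and] at key ⊢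
    split_ifs at key ⊢ <;> omega
  · simpa [hPn] using key

end Descents

section SignedPermutations

variable {k : ℕ}

lemma isSignedPerm_iff {w : Fin k → ℤ} :
    IsSignedPerm w ↔ ∃ σ : Equiv.Perm (Fin k), ∀ z, (w z).natAbs = σ z + 1 := by
  simp only [IsSignedPerm, Int.natAbs_eq_iff]
  push_cast
  rfl

lemma IsSignedPerm.natAbs_le {w : Fin k → ℤ} (hw : IsSignedPerm w) (z : Fin k) :
    (w z).natAbs ≤ k := by
  obtain ⟨σ, hσ⟩ := isSignedPerm_iff.mp hw
  rw [hσ z]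
  exact (σ z).isLt

lemma IsSignedPerm.abs_le {w : Fin k → ℤ} (hw : IsSignedPerm w) (z : Fin k) : |w z| ≤ k := by
  rw [Int.abs_eq_natAbs]
  exact_mod_cast hw.natAbs_le z

lemma IsSignedPerm.abs_wext_le {w : Fin k → ℤ} (hw : IsSignedPerm w) (j : ℕ) :
    |wext w j| ≤ k := by
  unfold wext
  split_ifs
  · exact hw.abs_le _
  · simp

lemma IsSignedPerm.insertNth {w : Fin k → ℤ} (hw : IsSignedPerm w) (p : Fin (k + 1)) {v : ℤ}
    (hv : v.natAbs = k + 1) : IsSignedPerm (Fin.insertNth p v w) := by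
  obtain ⟨σ, hσ⟩ := isSignedPerm_iff.mp hw
  refine isSignedPerm_iff.mpr
    ⟨(finSuccEquiv' p).trans ((Equiv.optionCongr σ).trans (finSuccEquiv' (Fin.last k)).symm),
      fun z => ?_⟩
  rcases eq_or_ne z p with rfl | hz
  · simp [hv]
  · obtain ⟨i, rfl⟩ := Fin.exists_succAbove_eq hz
    simp [hσ]

lemma IsSignedPerm.removeNth {u : Fin (k + 1) → ℤ} (hu : IsSignedPerm u) {p : Fin (k + 1)}
    (hp : (u p).natAbs = k + 1) : IsSignedPerm (Fin.removeNth p u) := by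
  obtain ⟨σ, hσ⟩ := isSignedPerm_iff.mp hu
  have hσp : σ p = Fin.last k := Fin.ext (by have := hσ p; simp only [Fin.val_last]; omega)
  have hne (i : Fin k) : σ (p.succAbove i) ≠ Fin.last k := by
    rw [← hσp]
    exact σ.injective.ne (p.succAbove_ne i)
  have hinj : Function.Injective fun i => (σ (p.succAbove i)).castPred (hne i) := by
    intro i j hij
    exact p.succAbove_right_injective (σ.injective (Fin.castPred_inj.mp hij))
  refine isSignedPerm_iff.mpr
    ⟨Equiv.ofBijective _ (Finite.injective_iff_bijective.mp hinj), fun i => ?_⟩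
  simp [Fin.removeNth, hσ]

lemma IsSignedPerm.exists_natAbs_eq {u : Fin (k + 1) → ℤ} (hu : IsSignedPerm u) :
    ∃ p, (u p).natAbs = k + 1 := by
  obtain ⟨σ, hσ⟩ := isSignedPerm_iff.mp hu
  exact ⟨σ.symm (Fin.last k), by simp [hσ]⟩

def signedVal (s : Bool) (n : ℕ) : ℤ := if s then n else -n

lemma natAbs_signedVal (s : Bool) (n : ℕ) : (signedVal s n).natAbs = n := by
  cases s <;> simp [signedVal]

lemma signedVal_injective {n : ℕ} (hn : n ≠ 0) : Function.Injective (signedVal · n) := by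
  intro s t h
  cases s <;> cases t <;> simp_all [signedVal]

abbrev SignedPerm (k : ℕ) := {w : Fin k → ℤ // IsSignedPerm w}

instance : Finite (SignedPerm k) :=
  Finite.of_injective (fun w z => (⟨w.1 z, abs_le.mp (w.2.abs_le z)⟩ : Set.Icc (-(k : ℤ)) k))
    fun _ _ h => Subtype.ext (funext fun z => congrArg Subtype.val (congrFun h z))

noncomputable instance : Fintype (SignedPerm k) := Fintype.ofFinite _

def insertSignedMax (w : Fin k → ℤ) (p : Fin (k + 1)) (s : Bool) : Fin (k + 1) → ℤ :=
  Fin.insertNth p (signedVal s (k + 1)) w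

lemma insertSignedMax_injective (k : ℕ) :
    Function.Injective fun x : SignedPerm k × Fin (k + 1) × Bool =>
      insertSignedMax x.1.1 x.2.1 x.2.2 := by
  rintro ⟨w, p, s⟩ ⟨w', p', s'⟩ h
  dsimp only [insertSignedMax] at h
  obtain rfl : p = p' := by
    by_contra hne
    obtain ⟨i, rfl⟩ := Fin.exists_succAbove_eq hne
    have hval := congrFun h (p'.succAbove i)
    rw [Fin.insertNth_apply_same, Fin.insertNth_apply_succAbove] at hval
    have := w'.2.natAbs_le i
    rw [← hval, natAbs_signedVal] at this
    omega
  obtain ⟨hs, hw⟩ := Fin.insertNth_injective2 h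
  rw [signedVal_injective k.succ_ne_zero hs, Subtype.ext hw]

lemma insertSignedMax_surjective (k : ℕ) (u : SignedPerm (k + 1)) :
    ∃ x : SignedPerm k × Fin (k + 1) × Bool, insertSignedMax x.1.1 x.2.1 x.2.2 = u.1 := by
  obtain ⟨p, hp⟩ := u.2.exists_natAbs_eq
  refine ⟨(⟨Fin.removeNth p u.1, u.2.removeNth hp⟩, p, decide (0 < u.1 p)), ?_⟩
  refine Fin.insertNth_eq_iff.mpr ⟨?_, rfl⟩
  rcases Int.natAbs_eq_iff.mp hp with h | h <;> rw [h] <;> simp [signedVal]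

noncomputable def insertEquiv (k : ℕ) :
    SignedPerm k × Fin (k + 1) × Bool ≃ SignedPerm (k + 1) :=
  Equiv.ofBijective
    (fun x => ⟨insertSignedMax x.1.1 x.2.1 x.2.2,
      x.1.2.insertNth x.2.1 (natAbs_signedVal x.2.2 (k + 1))⟩)
    ⟨fun _ _ h => insertSignedMax_injective k (congrArg Subtype.val h),
      fun u => (insertSignedMax_surjective k u).imp fun _ h => Subtype.ext h⟩

lemma wext_insertNth (w : Fin k → ℤ) (p : Fin (k + 1)) (v : ℤ) :
    wext (Fin.insertNth p v w) = insertAfter (wext w) p v := by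
  funext j
  rcases j with _ | j
  · simp [wext, insertAfter]
  unfold wext insertAfter
  simp only [add_tsub_cancel_right, le_add_iff_nonneg_left, zero_le, and_true,
    Nat.add_right_cancel_iff]
  by_cases hj : j < k + 1
  · rw [dif_pos hj]
    rcases lt_trichotomy j p with h | rfl | h
    · rw [if_pos (by omega), dif_pos (by omega),
        Fin.insertNth_apply_below (show (⟨j, hj⟩ : Fin (k + 1)) < p from h), eq_rec_constant]
      rfl
    · rw [if_neg (by omega), if_pos rfl]
      exact Fin.insertNth_apply_same _ _ _
    · rw [if_neg (by omega), if_neg (by omega), dif_pos (by omega),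
        Fin.insertNth_apply_above (show p < (⟨j, hj⟩ : Fin (k + 1)) from h), eq_rec_constant]
      rfl
  · rw [dif_neg hj, if_neg (by omega), if_neg (by omega), dif_neg (by omega)]

lemma signedDescentCount_eq_descentsBelow (w : Fin k → ℤ) :
    signedDescentCount w = descentsBelow (wext w) k := by
  rw [signedDescentCount, descentsBelow, ← card_filter, ← Nat.card_eq_finsetCard]
  exact Nat.card_congr (Equiv.subtypeEquivRight (by simp))

/-- Inserted into a descent `wext w (p + 1) < wext w p`, `±(k + 1)` trades it for a new one;
inserted anywhere else it adds a descent, except for `k + 1` at the end. -/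
def KeepsDescentCount (w : Fin k → ℤ) (p : Fin (k + 1)) (s : Bool) : Prop :=
  if s then (p : ℕ) = k ∨ wext w (p + 1) < wext w p
  else (p : ℕ) < k ∧ wext w (p + 1) < wext w p

instance (w : Fin k → ℤ) (p : Fin (k + 1)) (s : Bool) :
    Decidable (KeepsDescentCount w p s) := by
  unfold KeepsDescentCount
  infer_instance

lemma signedDescentCount_insertSignedMax {w : Fin k → ℤ} (hw : IsSignedPerm w)
    (p : Fin (k + 1)) (s : Bool) :
    signedDescentCount (insertSignedMax w p s) =
      signedDescentCount w + if KeepsDescentCount w p s then 0 else 1 := by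
  have hp : (p : ℕ) ≤ k := Nat.lt_succ_iff.mp p.isLt
  have hlow (j : ℕ) : signedVal false (k + 1) < wext w j := by
    simp only [signedVal]; push_cast; linarith [(abs_le.mp (hw.abs_wext_le j)).1]
  have hhigh (j : ℕ) : wext w j < signedVal true (k + 1) := by
    simp only [signedVal]; push_cast; linarith [(abs_le.mp (hw.abs_wext_le j)).2]
  rw [signedDescentCount_eq_descentsBelow, signedDescentCount_eq_descentsBelow, insertSignedMax,
    wext_insertNth]
  cases s
  · simpa [KeepsDescentCount] using
      descentsBelow_insertAfter_of_gt (wext w) hp fun j _ => hlow j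
  · simpa [KeepsDescentCount] using
      descentsBelow_insertAfter_of_lt (wext w) hp fun j _ => hhigh j

lemma card_keepsDescentCount (w : Fin k → ℤ) :
    #{x : Fin (k + 1) × Bool | KeepsDescentCount w x.1 x.2} = 2 * signedDescentCount w + 1 := by
  rw [card_filter, Fintype.sum_prod_type, Fin.sum_univ_castSucc,
    signedDescentCount_eq_descentsBelow, descentsBelow, ← Fin.sum_univ_eq_sum_range]
  have hne (i : Fin k) : (i : ℕ) ≠ k := i.isLt.ne
  simp only [Fintype.sum_bool, KeepsDescentCount, if_true, Bool.false_eq_true, if_false,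
    Fin.val_castSucc, Fin.val_last, Fin.is_lt, hne, true_and, false_or, true_or, lt_irrefl,
    false_and]
  rw [sum_add_distrib]
  ring

lemma sum_insertSignedMax_descentCount_eq {w : Fin k → ℤ} (hw : IsSignedPerm w) (m : ℕ) :
    (∑ x : Fin (k + 1) × Bool,
        if signedDescentCount (insertSignedMax w x.1 x.2) = m then 1 else 0 : ℝ) =
      (2 * signedDescentCount w + 1) * (if signedDescentCount w = m then 1 else 0) +
        (2 * k + 1 - 2 * signedDescentCount w) *
          (if signedDescentCount w + 1 = m then 1 else 0) := by
  have hsplit (x : Fin (k + 1) × Bool) :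
      (if signedDescentCount (insertSignedMax w x.1 x.2) = m then 1 else 0 : ℝ) =
        if KeepsDescentCount w x.1 x.2 then (if signedDescentCount w = m then 1 else 0)
        else (if signedDescentCount w + 1 = m then 1 else 0) := by
    by_cases h : KeepsDescentCount w x.1 x.2 <;> simp [signedDescentCount_insertSignedMax hw, h]
  have hcard := card_filter_add_card_filter_not (s := univ)
    fun x : Fin (k + 1) × Bool => KeepsDescentCount w x.1 x.2
  rw [card_keepsDescentCount, card_univ, Fintype.card_prod, Fintype.card_fin,
    Fintype.card_bool] at hcard
  have hnot : (#{x : Fin (k + 1) × Bool | ¬KeepsDescentCount w x.1 x.2} : ℝ) =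
      2 * k + 1 - 2 * signedDescentCount w := by
    rw [eq_sub_iff_add_eq]
    exact_mod_cast (by omega : _)
  rw [sum_congr rfl fun x _ => hsplit x, sum_ite, sum_const, sum_const, card_keepsDescentCount,
    nsmul_eq_mul, nsmul_eq_mul, hnot]
  push_cast
  ring

lemma eulerianBNum_eq_sum (k ℓ : ℕ) :
    (eulerianBNum k ℓ : ℝ) =
      ∑ w : SignedPerm k, if signedDescentCount w.1 = ℓ then 1 else 0 := by
  rw [sum_boole, eulerianBNum, ← Fintype.card_subtype, ← Nat.card_eq_fintype_card,
    Nat.card_congr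
      (Equiv.subtypeSubtypeEquivSubtypeInter IsSignedPerm (signedDescentCount · = ℓ))]

lemma eulerianBNum_zero (ℓ : ℕ) : (eulerianBNum 0 ℓ : ℝ) = if ℓ = 0 then 1 else 0 := by
  have hw : IsSignedPerm (Fin.elim0 : Fin 0 → ℤ) := ⟨1, nofun⟩
  rw [eulerianBNum_eq_sum, Fintype.sum_subsingleton _ ⟨_, hw⟩,
    signedDescentCount_eq_descentsBelow]
  simp [descentsBelow, eq_comm]

lemma eulerianBNum_succ (k m : ℕ) :
    (eulerianBNum (k + 1) m : ℝ) = ∑ w : SignedPerm k,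
      ((2 * signedDescentCount w.1 + 1) * (if signedDescentCount w.1 = m then 1 else 0) +
        (2 * k + 1 - 2 * signedDescentCount w.1) *
          (if signedDescentCount w.1 + 1 = m then 1 else 0) : ℝ) := by
  rw [eulerianBNum_eq_sum, ← (insertEquiv k).sum_comp, Fintype.sum_prod_type]
  exact sum_congr rfl fun w _ => sum_insertSignedMax_descentCount_eq w.2 m

lemma eulerianBNum_succ_zero (k : ℕ) : (eulerianBNum (k + 1) 0 : ℝ) = eulerianBNum k 0 := by
  rw [eulerianBNum_succ, eulerianBNum_eq_sum]
  refine sum_congr rfl fun w _ => ?_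
  by_cases h : signedDescentCount w.1 = 0 <;> simp [h]

lemma eulerianBNum_succ_succ (k m : ℕ) :
    (eulerianBNum (k + 1) (m + 1) : ℝ) =
      (2 * m + 3) * eulerianBNum k (m + 1) + (2 * k + 1 - 2 * m) * eulerianBNum k m := by
  rw [eulerianBNum_succ, eulerianBNum_eq_sum, eulerianBNum_eq_sum, mul_sum, mul_sum,
    ← sum_add_distrib]
  refine sum_congr rfl fun w _ => ?_
  by_cases h : signedDescentCount w.1 = m + 1
  · simp only [h, Nat.cast_add, Nat.cast_one, ↓reduceIte, mul_one, Nat.add_eq_left, one_ne_zero,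
      mul_zero, add_zero]
    ring
  · by_cases h' : signedDescentCount w.1 = m <;> simp [h, h']

end SignedPermutations

noncomputable def altBinomSum (N ℓ e : ℕ) : ℝ :=
  ∑ j ∈ range (ℓ + 1), (-1) ^ j * (N.choose j : ℝ) * (2 * ℓ + 1 - 2 * j) ^ e

lemma altBinomSum_zero_middle (N e : ℕ) : altBinomSum N 0 e = 1 := by
  simp [altBinomSum]

lemma altBinomSum_zero_left (ℓ e : ℕ) : altBinomSum 0 ℓ e = (2 * ℓ + 1) ^ e := by
  simp [altBinomSum, sum_range_succ']

lemma altBinomSum_pascal (N ℓ e : ℕ) :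
    altBinomSum (N + 1) (ℓ + 1) e = altBinomSum N (ℓ + 1) e - altBinomSum N ℓ e := by
  suffices altBinomSum (N + 1) (ℓ + 1) e - altBinomSum N (ℓ + 1) e = -altBinomSum N ℓ e by
    linarith
  rw [altBinomSum, altBinomSum, altBinomSum, ← sum_sub_distrib, sum_range_succ',
    ← sum_neg_distrib]
  simp only [Nat.choose_zero_right, sub_self, add_zero]
  refine sum_congr rfl fun j _ => ?_
  rw [Nat.choose_succ_succ']
  push_cast
  ring

lemma sum_mul_choose_succ (N ℓ e : ℕ) :
    ∑ j ∈ range (ℓ + 2),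
        (-1) ^ j * (j : ℝ) * ((N + 1).choose j : ℝ) * (2 * (ℓ + 1) + 1 - 2 * j) ^ e =
      -(N + 1) * altBinomSum N ℓ e := by
  rw [sum_range_succ', altBinomSum, mul_sum]
  simp only [Nat.cast_zero, mul_zero, zero_mul, add_zero]
  refine sum_congr rfl fun j _ => ?_
  have h : ((N + 1 : ℕ) : ℝ) * N.choose j = (N + 1).choose (j + 1) * (j + 1 : ℕ) := by
    exact_mod_cast Nat.add_one_mul_choose_eq N j
  push_cast at h ⊢
  linear_combination (-1) ^ j * (2 * (ℓ : ℝ) + 1 - 2 * j) ^ e * h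

lemma altBinomSum_succ_pow (N ℓ e : ℕ) :
    altBinomSum (N + 1) (ℓ + 1) (e + 1) =
      (2 * ℓ + 3) * altBinomSum N (ℓ + 1) e + (2 * N - 2 * ℓ - 1) * altBinomSum N ℓ e := by
  have hsplit : altBinomSum (N + 1) (ℓ + 1) (e + 1) =
      (2 * ℓ + 3) * altBinomSum (N + 1) (ℓ + 1) e -
        2 * ∑ j ∈ range (ℓ + 2),
          (-1) ^ j * (j : ℝ) * ((N + 1).choose j : ℝ) * (2 * (ℓ + 1) + 1 - 2 * j) ^ e := by
    rw [altBinomSum, altBinomSum, mul_sum, mul_sum, ← sum_sub_distrib]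
    refine sum_congr rfl fun j _ => ?_
    push_cast
    ring
  rw [hsplit, sum_mul_choose_succ, altBinomSum_pascal]
  ring

lemma eulerianBNum_eq_altBinomSum (k ℓ : ℕ) :
    (eulerianBNum k ℓ : ℝ) = altBinomSum (k + 1) ℓ k := by
  induction k generalizing ℓ with
  | zero =>
    rcases ℓ with _ | ℓ
    · simp [eulerianBNum_zero, altBinomSum_zero_middle]
    · simp [eulerianBNum_zero, altBinomSum_pascal, altBinomSum_zero_left]
  | succ k ih =>
    rcases ℓ with _ | m
    · rw [eulerianBNum_succ_zero, ih, altBinomSum_zero_middle, altBinomSum_zero_middle]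
    · rw [eulerianBNum_succ_succ, ih, ih, altBinomSum_succ_pow]
      push_cast
      ring

lemma irwinHallF_of_neg (k : ℕ) {x : ℝ} (hx : x < 0) : irwinHallF k x = 0 :=
  if_pos hx

lemma two_pow_mul_factorial_mul_irwinHallF (k n : ℕ) :
    2 ^ k * (k.factorial : ℝ) * irwinHallF k (n + 1 / 2) = altBinomSum k n k := by
  have hfloor : ⌊(n : ℝ) + 1 / 2⌋ = n := by
    rw [Int.floor_eq_iff]
    constructor <;> push_cast <;> linarith
  rw [irwinHallF, if_neg (not_lt.mpr (by positivity)), hfloor, Int.toNat_natCast, altBinomSum,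
    mul_sum, mul_sum]
  refine sum_congr rfl fun j _ => ?_
  rw [show (2 * n + 1 - 2 * j : ℝ) ^ k = 2 ^ k * (n + 1 / 2 - j) ^ k by rw [← mul_pow]; ring]
  field_simp

theorem stmt18_general (k ℓ : ℕ) :
    (eulerianBNum k ℓ : ℝ) =
    2 ^ k * (k.factorial : ℝ) *
      (irwinHallF k ((ℓ : ℝ) + 1 / 2) - irwinHallF k ((ℓ : ℝ) - 1 / 2)) := by
  rw [eulerianBNum_eq_altBinomSum, mul_sub, two_pow_mul_factorial_mul_irwinHallF]
  rcases ℓ with _ | m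
  · rw [irwinHallF_of_neg k (by norm_num), altBinomSum_zero_middle, altBinomSum_zero_middle]
    ring
  · have hshift : ((m + 1 : ℕ) : ℝ) - 1 / 2 = m + 1 / 2 := by push_cast; ring
    rw [hshift, two_pow_mul_factorial_mul_irwinHallF, altBinomSum_pascal]

/-- `⟨B_k, ℓ⟩ = 2^k · k! · (F_k(ℓ + 1/2) − F_k(ℓ − 1/2))`. -/
theorem stmt18 (k ℓ : ℕ) (hk : 1 ≤ k) (hl : ℓ ≤ k) :
    (eulerianBNum k ℓ : ℝ) =
    2 ^ k * (k.factorial : ℝ) *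
      (irwinHallF k ((ℓ : ℝ) + 1 / 2) - irwinHallF k ((ℓ : ℝ) - 1 / 2)) :=
  stmt18_general k ℓ
end
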